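/- arXiv:1210.4778 — 5 statements merged into one kernel-verified Lean document; each statement's English description precedes it below -/
import Mathlib

section
/- Let n ≥ 2 and let P be an n×n real column stochastic matrix with P_{jj} > 0 for all j and such that for every pair of indices (j, i) there exists m ≥ 1 with (P^m)_{ji} > 0. Let τ̄ ∈ ℕ and let τ(k, j, i) ∈ {0, …, τ̄} be delay functions with τ(k, j, j) = 0 for all k, j. Let y and z both evolve by the delayed iteration driven by P and τ, with initial conditions y[0] = y₀ ∈ ℝⁿ and z[0] = 𝟙 (the all-ones vector). Then z_j[k] > 0 for all j and k, and for every j, the ratio μ_j[k] = y_j[k] / z_j[k] converges as k → ∞ to (Σ_{l=1}^n y₀(l)) / n, the average of the initial values. -/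
open Matrix Filter

/-- An `n × n` real matrix is column stochastic if all entries are nonnegative and
each column sums to `1`. -/
def ColStoch {N : Type*} [Fintype N] (A : Matrix N N ℝ) : Prop :=
  (∀ j i, 0 ≤ A j i) ∧ ∀ i, ∑ j, A j i = 1

/-- The delayed iteration driven by weight matrix `P` and delay functions `τ`:
`x_j[k+1] = Σ_i Σ_{s=0}^{k} [s + τ(s,j,i) = k] ⬝ P_{ji} ⬝ x_i[s]`. -/
def DelayedIter {n : ℕ} (P : Matrix (Fin n) (Fin n) ℝ)
    (τ : ℕ → Fin n → Fin n → ℕ) (x : ℕ → Fin n → ℝ) : Prop :=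
  ∀ k j, x (k + 1) j =
    ∑ i, ∑ s ∈ Finset.range (k + 1), if s + τ s j i = k then P j i * x s i else 0

/-!
Augment the state by delay buffers, `(j, d)` holding the weight due at node `j` in `d` steps.
The delayed iteration becomes a time-varying linear recursion `X (k + 1) = M k *ᵥ X k` with
column-stochastic `M k`, so the total mass is conserved. Self-loops, strong connectivity and
bounded delays give `δ > 0` and `L` such that every product of `L` consecutive steps has all
rows `(j, 0)` bounded below by `δ`, uniformly in time. A Dobrushin-type ℓ¹ contraction then makes
the zero-mass solution `y - μ z` decay geometrically, while `z_j[k] ≥ n δ` for `k ≥ L`; hence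
`y_j / z_j → μ`, the average of `y₀`.
-/

open Finset

lemma Finite.exists_pos_le_of_pos {ι : Type*} [Finite ι] (f : ι → ℝ) :
    ∃ c, 0 < c ∧ c ≤ 1 ∧ ∀ i, 0 < f i → c ≤ f i := by
  rcases isEmpty_or_nonempty ι with hι | hι
  · exact ⟨1, one_pos, le_rfl, fun i => isEmptyElim i⟩
  obtain ⟨i₀, hi₀⟩ := Finite.exists_min fun i => if 0 < f i then min (f i) 1 else 1
  refine ⟨_, ?_, ?_, fun i hi => (hi₀ i).trans ?_⟩
  · split_ifs with h
    exacts [lt_min h one_pos, one_pos]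
  · split_ifs
    exacts [min_le_right _ _, le_rfl]
  · rw [if_pos hi]
    exact min_le_left _ _

lemma Fin.sum_ite_val_eq {M : Type*} [AddCommMonoid M] {m t : ℕ} (g : ℕ → M)
    (hg : m ≤ t → g t = 0) : ∑ e : Fin m, (if (e : ℕ) = t then g e else 0) = g t := by
  rw [Fin.sum_univ_eq_sum_range (fun e => if e = t then g e else 0), sum_ite_eq']
  by_cases h : t < m
  · simp [h]
  · simp [h, hg (not_lt.1 h)]

lemma Antitone.le_pow_div_mul {D : ℕ → ℝ} (hD : Antitone D) {L : ℕ} {r : ℝ} (hr : 0 ≤ r)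
    (hL : ∀ k, D (k + L) ≤ r * D k) (k : ℕ) : D k ≤ r ^ (k / L) * D 0 := by
  have key : ∀ q m, D (m + L * q) ≤ r ^ q * D m := by
    intro q m
    induction q with
    | zero => simp
    | succ q ih =>
      calc D (m + L * (q + 1)) = D (m + L * q + L) := by rw [mul_add_one, add_assoc]
        _ ≤ r * (r ^ q * D m) := (hL _).trans (mul_le_mul_of_nonneg_left ih hr)
        _ = r ^ (q + 1) * D m := by ring
  calc D k = D (k % L + L * (k / L)) := by rw [Nat.mod_add_div]
    _ ≤ r ^ (k / L) * D (k % L) := key _ _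
    _ ≤ r ^ (k / L) * D 0 := mul_le_mul_of_nonneg_left (hD (Nat.zero_le _)) (by positivity)

lemma tendsto_pow_div_atTop_nhds_zero {r : ℝ} (hr₀ : 0 ≤ r) (hr₁ : r < 1) {L : ℕ} (hL : L ≠ 0) :
    Tendsto (fun k : ℕ => r ^ (k / L)) atTop (nhds 0) :=
  (tendsto_pow_atTop_nhds_zero_of_lt_one hr₀ hr₁).comp (Nat.tendsto_div_const_atTop hL)

namespace Matrix

lemma mul_le_mul_apply {l m o R : Type*} [Fintype m] [Semiring R] [PartialOrder R]
    [IsOrderedRing R] {A : Matrix l m R} {B : Matrix m o R} (hA : ∀ i j, 0 ≤ A i j)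
    (hB : ∀ i j, 0 ≤ B i j) {a b : R} {x : l} {y : m} {z : o} (ha : a ≤ A x y)
    (hb : b ≤ B y z) (hb₀ : 0 ≤ b) : a * b ≤ (A * B) x z :=
  (mul_le_mul ha hb hb₀ (hA x y)).trans <| by
    rw [mul_apply]
    exact single_le_sum (f := fun y => A x y * B y z) (fun y _ => mul_nonneg (hA x y) (hB y z))
      (mem_univ y)

variable {W : Type*} [Fintype W] [DecidableEq W]

lemma sum_abs_mulVec_le_of_mem_colStochastic {A : Matrix W W ℝ} (hA : A ∈ colStochastic ℝ W)
    {w : W → ℝ} (hw : ∀ a c, w a ≤ A a c) {u : W → ℝ} (hu : ∑ c, u c = 0) :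
    ∑ a, |(A *ᵥ u) a| ≤ (1 - ∑ a, w a) * ∑ c, |u c| := by
  have hrow : ∀ a, |(A *ᵥ u) a| ≤ ∑ c, (A a c - w a) * |u c| := fun a => by
    -- since `∑ u = 0`, shifting a row by a constant does not change `A *ᵥ u`
    have : (A *ᵥ u) a = ∑ c, (A a c - w a) * u c := by
      simp [mulVec, dotProduct, sub_mul, sum_sub_distrib, ← mul_sum, hu]
    rw [this]
    refine (abs_sum_le_sum_abs _ _).trans_eq (sum_congr rfl fun c _ => ?_)
    rw [abs_mul, abs_of_nonneg (sub_nonneg.2 (hw a c))]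
  calc ∑ a, |(A *ᵥ u) a| ≤ ∑ a, ∑ c, (A a c - w a) * |u c| := sum_le_sum fun a _ => hrow a
    _ = (1 - ∑ a, w a) * ∑ c, |u c| := by
      rw [sum_comm, mul_sum]
      simp only [← sum_mul, sum_sub_distrib, sum_col_of_mem_colStochastic hA]

end Matrix

namespace DelayedIter

variable {n τbar : ℕ} {P : Matrix (Fin n) (Fin n) ℝ} {τ : ℕ → Fin n → Fin n → ℕ}

/-- The augmented state `(j, d)` holds the weight due to reach node `j` in `d` more steps.
In one step a value at `(i, 0)` is sent to `(j, τ k j i)` with weight `P j i`, and every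
buffered weight moves from `(j, d + 1)` to `(j, d)`. -/
def augStep (τbar : ℕ) (P : Matrix (Fin n) (Fin n) ℝ) (τ : ℕ → Fin n → Fin n → ℕ) (k : ℕ) :
    Matrix (Fin n × Fin (τbar + 1)) (Fin n × Fin (τbar + 1)) ℝ := fun a b =>
  (if b.2 = 0 ∧ (a.2 : ℕ) = τ k a.1 b.1 then P a.1 b.1 else 0) +
    if b.1 = a.1 ∧ (a.2 : ℕ) + 1 = b.2 then 1 else 0

lemma augStep_mem_colStochastic (hP : P ∈ colStochastic ℝ (Fin n))
    (hτ : ∀ k j i, τ k j i ≤ τbar) (k : ℕ) :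
    augStep τbar P τ k ∈ colStochastic ℝ (Fin n × Fin (τbar + 1)) := by
  refine mem_colStochastic_iff_sum.2 ⟨fun a b => ?_, fun ⟨i, e⟩ => ?_⟩
  · unfold augStep
    have := nonneg_of_mem_colStochastic hP (i := a.1) (j := b.1)
    positivity
  · simp only [augStep, sum_add_distrib, Fintype.sum_prod_type]
    by_cases he : e = 0
    · have hsend (j : Fin n) :
          ∑ d : Fin (τbar + 1), (if (d : ℕ) = τ k j i then P j i else 0) = P j i :=
        Fin.sum_ite_val_eq (fun _ => P j i) fun h => by have := hτ k j i; omega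
      simp [he, hsend, sum_col_of_mem_colStochastic hP]
    · have he' : (e : ℕ) ≠ 0 := mt Fin.val_eq_zero_iff.1 he
      have hshift (j : Fin n) :
          ∑ d : Fin (τbar + 1), (if i = j ∧ (d : ℕ) + 1 = e then (1 : ℝ) else 0) =
            if i = j then 1 else 0 := by
        split_ifs with hij
        · have (d : Fin (τbar + 1)) : (d : ℕ) + 1 = e ↔ (d : ℕ) = e - 1 := by omega
          simpa [hij, this] using
            Fin.sum_ite_val_eq (m := τbar + 1) (fun _ => (1 : ℝ)) fun h => by omega
        · simp [hij]
      simp [he, hshift]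

def augProd (τbar : ℕ) (P : Matrix (Fin n) (Fin n) ℝ) (τ : ℕ → Fin n → Fin n → ℕ) :
    ℕ → ℕ → Matrix (Fin n × Fin (τbar + 1)) (Fin n × Fin (τbar + 1)) ℝ
  | 0, _ => 1
  | t + 1, k => augStep τbar P τ (k + t) * augProd τbar P τ t k

lemma augProd_mem_colStochastic (hP : P ∈ colStochastic ℝ (Fin n))
    (hτ : ∀ k j i, τ k j i ≤ τbar) (t k : ℕ) :
    augProd τbar P τ t k ∈ colStochastic ℝ (Fin n × Fin (τbar + 1)) := by
  induction t with
  | zero => exact one_mem _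
  | succ t ih => exact mul_mem (augStep_mem_colStochastic hP hτ _) ih

lemma augProd_add (t₁ t₂ k : ℕ) :
    augProd τbar P τ (t₁ + t₂) k = augProd τbar P τ t₁ (k + t₂) * augProd τbar P τ t₂ k := by
  induction t₁ with
  | zero => simp [augProd]
  | succ t₁ ih =>
    rw [Nat.add_right_comm, augProd, ih, augProd, Matrix.mul_assoc, add_assoc, add_comm t₂]

lemma augProd_one (k : ℕ) : augProd τbar P τ 1 k = augStep τbar P τ k := by
  simp [augProd]

lemma mul_le_augProd_add (hP : P ∈ colStochastic ℝ (Fin n)) (hτ : ∀ k j i, τ k j i ≤ τbar)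
    {t₁ t₂ k : ℕ} {x y z : Fin n × Fin (τbar + 1)} {a b : ℝ}
    (ha : a ≤ augProd τbar P τ t₁ (k + t₂) x y) (hb : b ≤ augProd τbar P τ t₂ k y z)
    (hb₀ : 0 ≤ b) : a * b ≤ augProd τbar P τ (t₁ + t₂) k x z := by
  rw [augProd_add]
  have hnonneg (t k) := fun a b =>
    nonneg_of_mem_colStochastic (augProd_mem_colStochastic hP hτ t k) (i := a) (j := b)
  exact mul_le_mul_apply (hnonneg _ _) (hnonneg _ _) ha hb hb₀

lemma one_le_augProd_shift (hP : P ∈ colStochastic ℝ (Fin n)) (hτ : ∀ k j i, τ k j i ≤ τbar)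
    (e k : ℕ) (i : Fin n) (d d' : Fin (τbar + 1)) (hd : (d : ℕ) + e = d') :
    1 ≤ augProd τbar P τ e k (i, d) (i, d') := by
  induction e generalizing d with
  | zero =>
    obtain rfl : d = d' := Fin.ext hd
    simp [augProd]
  | succ e ih =>
    have hstep : 1 ≤ augProd τbar P τ 1 (k + e) (i, d) (i, ⟨d + 1, by omega⟩) := by
      simp [augProd_one, augStep]
    have hrest := ih ⟨d + 1, by omega⟩ (by simp only; omega)
    simpa [add_comm 1 e] using mul_le_augProd_add hP hτ hstep hrest zero_le_one

lemma pow_le_augProd_diag (hP : P ∈ colStochastic ℝ (Fin n)) (hτ : ∀ k j i, τ k j i ≤ τbar)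
    (hτself : ∀ k j, τ k j j = 0) {c : ℝ} {j : Fin n} (hc₀ : 0 ≤ c) (hc : c ≤ P j j) (r k : ℕ) :
    c ^ r ≤ augProd τbar P τ r k (j, 0) (j, 0) := by
  induction r with
  | zero => simp [augProd]
  | succ r ih =>
    have hstep : c ≤ augProd τbar P τ 1 (k + r) (j, 0) (j, 0) := by
      simpa [augProd_one, augStep, hτself] using hc
    simpa [pow_succ', add_comm 1 r] using
      mul_le_augProd_add hP hτ hstep ih (pow_nonneg hc₀ r)

lemma pow_le_augProd_of_pos (hP : P ∈ colStochastic ℝ (Fin n)) (hτ : ∀ k j i, τ k j i ≤ τbar)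
    (hτself : ∀ k j, τ k j j = 0) {c : ℝ} {j l : Fin n} (hc₀ : 0 ≤ c) (hc₁ : c ≤ 1)
    (hcj : c ≤ P j j) (hcl : c ≤ P j l) {s : ℕ} (hs : τbar + 1 ≤ s) (k : ℕ) :
    c ^ s ≤ augProd τbar P τ s k (j, 0) (l, 0) := by
  set t := τ k j l
  have ht : t ≤ τbar := hτ k j l
  -- send from `l` into the buffer `(j, t)`, then let the buffer drain into `j`
  have hsend : c ≤ augProd τbar P τ 1 k (j, ⟨t, by omega⟩) (l, 0) := by
    simpa [augProd_one, augStep, t] using hcl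
  have hdrain := one_le_augProd_shift hP hτ t (k + 1) j 0 ⟨t, by omega⟩ (by simp)
  have hhop := mul_le_augProd_add hP hτ hdrain hsend hc₀
  have hwait := pow_le_augProd_diag hP hτ hτself hc₀ hcj (s - (t + 1)) (k + (t + 1))
  calc c ^ s ≤ c ^ (s - (t + 1)) * (1 * c) := by
        rw [one_mul, ← pow_succ]; exact pow_le_pow_of_le_one hc₀ hc₁ (by omega)
    _ ≤ augProd τbar P τ (s - (t + 1) + (t + 1)) k (j, 0) (l, 0) :=
        mul_le_augProd_add hP hτ hwait hhop (by positivity)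
    _ = augProd τbar P τ s k (j, 0) (l, 0) := by rw [Nat.sub_add_cancel (by omega)]

lemma pow_le_augProd_of_pow_pos (hP : P ∈ colStochastic ℝ (Fin n))
    (hτ : ∀ k j i, τ k j i ≤ τbar) (hτself : ∀ k j, τ k j j = 0) {c : ℝ} (hc₀ : 0 ≤ c)
    (hc₁ : c ≤ 1) (hc : ∀ j i, 0 < P j i → c ≤ P j i) (hdiag : ∀ j, 0 < P j j) (m : ℕ)
    {j i : Fin n} (hm : 0 < (P ^ m) j i) {s : ℕ} (hs : m * (τbar + 1) ≤ s) (k : ℕ) :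
    c ^ s ≤ augProd τbar P τ s k (j, 0) (i, 0) := by
  induction m generalizing j s k with
  | zero =>
    obtain rfl : j = i := by
      by_contra h
      simp [one_apply_ne h] at hm
    exact pow_le_augProd_diag hP hτ hτself hc₀ (hc j j (hdiag j)) s k
  | succ m ih =>
    rw [pow_succ', mul_apply] at hm
    obtain ⟨l, -, hl⟩ :=
      exists_lt_of_sum_lt (s := univ) (f := fun _ => (0 : ℝ)) (by simpa using hm)
    have hPjl : 0 < P j l := pos_of_mul_pos_left hl
      (nonneg_of_mem_colStochastic (pow_mem hP m))
    have hPli : 0 < (P ^ m) l i := pos_of_mul_pos_right hl (nonneg_of_mem_colStochastic hP)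
    set s₂ := m * (τbar + 1)
    have hs₂ : s₂ + (τbar + 1) ≤ s := by rwa [add_one_mul] at hs
    have hhop := pow_le_augProd_of_pos hP hτ hτself hc₀ hc₁ (hc j j (hdiag j)) (hc j l hPjl)
      (s := s - s₂) (by omega) (k + s₂)
    have hpath := ih hPli le_rfl k
    calc c ^ s = c ^ (s - s₂) * c ^ s₂ := by rw [← pow_add, Nat.sub_add_cancel (by omega)]
      _ ≤ augProd τbar P τ (s - s₂ + s₂) k (j, 0) (i, 0) :=
          mul_le_augProd_add hP hτ hhop hpath (by positivity)
      _ = augProd τbar P τ s k (j, 0) (i, 0) := by rw [Nat.sub_add_cancel (by omega)]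

lemma exists_le_augProd (hP : P ∈ colStochastic ℝ (Fin n)) (hdiag : ∀ j, 0 < P j j)
    (hirr : ∀ j i, ∃ m, 0 < (P ^ m) j i) (hτ : ∀ k j i, τ k j i ≤ τbar)
    (hτself : ∀ k j, τ k j j = 0) :
    ∃ δ > 0, ∃ L > 0, ∀ k j b, δ ≤ augProd τbar P τ L k (j, 0) b := by
  obtain ⟨c, hc₀, hc₁, hc⟩ := Finite.exists_pos_le_of_pos fun p : Fin n × Fin n => P p.1 p.2
  choose m hm using hirr
  obtain ⟨M, hM⟩ := Finite.exists_le fun p : Fin n × Fin n => m p.1 p.2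
  -- room for a path of at most `M` hops of at most `τbar + 1` steps each, and for draining a
  -- buffer of depth at most `τbar`
  refine ⟨c ^ ((M + 1) * (τbar + 1)), by positivity, (M + 1) * (τbar + 1), by positivity,
    fun k j ⟨i, d⟩ => ?_⟩
  set L := (M + 1) * (τbar + 1)
  have hL : L = M * (τbar + 1) + (τbar + 1) := add_one_mul _ _
  have hd : (d : ℕ) ≤ τbar := Nat.lt_succ_iff.1 d.2
  have hmL : m j i * (τbar + 1) ≤ L - d := by
    have := Nat.mul_le_mul_right (τbar + 1) (show m j i ≤ M from hM (j, i))
    omega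
  have hpath := pow_le_augProd_of_pow_pos hP hτ hτself hc₀.le hc₁ (fun j i => hc (j, i)) hdiag
    (m j i) (hm j i) hmL (k + d)
  have hdrain := one_le_augProd_shift hP hτ d k i 0 d (by simp)
  calc c ^ L ≤ c ^ (L - d) * 1 := by rw [mul_one]; exact pow_le_pow_of_le_one hc₀.le hc₁ (by omega)
    _ ≤ augProd τbar P τ (L - d + d) k (j, 0) (i, d) :=
        mul_le_augProd_add hP hτ hpath hdrain zero_le_one
    _ = augProd τbar P τ L k (j, 0) (i, d) := by rw [Nat.sub_add_cancel (by omega)]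

variable {x : ℕ → Fin n → ℝ}

/-- The weight that reaches node `j` at step `k + d` from values sent before step `k`; the
initial value `x 0 j` counts as arriving at step `0`. -/
def inFlight (P : Matrix (Fin n) (Fin n) ℝ) (τ : ℕ → Fin n → Fin n → ℕ) (x : ℕ → Fin n → ℝ)
    (k : ℕ) (j : Fin n) (d : ℕ) : ℝ :=
  (if k + d = 0 then x 0 j else 0) +
    ∑ i, ∑ s ∈ range k, if s + τ s j i + 1 = k + d then P j i * x s i else 0

def augState (τbar : ℕ) (P : Matrix (Fin n) (Fin n) ℝ) (τ : ℕ → Fin n → Fin n → ℕ)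
    (x : ℕ → Fin n → ℝ) (k : ℕ) (a : Fin n × Fin (τbar + 1)) : ℝ :=
  inFlight P τ x k a.1 a.2

lemma inFlight_zero (hx : DelayedIter P τ x) (k : ℕ) (j : Fin n) :
    inFlight P τ x k j 0 = x k j := by
  cases k with
  | zero => simp [inFlight]
  | succ k => simp [inFlight, hx k j]

lemma augState_apply_zero (hx : DelayedIter P τ x) (k : ℕ) (j : Fin n) :
    augState τbar P τ x k (j, 0) = x k j :=
  inFlight_zero hx k j

lemma inFlight_succ (k : ℕ) (j : Fin n) (d : ℕ) :
    inFlight P τ x (k + 1) j d =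
      (∑ i, if τ k j i = d then P j i * x k i else 0) + inFlight P τ x k j (d + 1) := by
  have h₁ : k + 1 + d = k + (d + 1) := by omega
  have h₂ (i : Fin n) : k + τ k j i + 1 = k + (d + 1) ↔ τ k j i = d := by omega
  simp only [inFlight, sum_range_succ, sum_add_distrib, h₁, h₂, Nat.add_eq_zero_iff,
    Nat.add_one_ne_zero, and_false, if_false, zero_add]
  ring

lemma inFlight_eq_zero (hτ : ∀ k j i, τ k j i ≤ τbar) (k : ℕ) (j : Fin n) {d : ℕ}
    (hd : τbar < d) : inFlight P τ x k j d = 0 := by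
  rw [inFlight, if_neg (by omega), zero_add]
  refine sum_eq_zero fun i _ => sum_eq_zero fun s hs => if_neg ?_
  have := hτ s j i
  have := mem_range.1 hs
  omega

lemma augStep_mulVec_apply (k : ℕ) (f : Fin n × Fin (τbar + 1) → ℝ) (j : Fin n)
    (d : Fin (τbar + 1)) :
    (augStep τbar P τ k *ᵥ f) (j, d) =
      (∑ i, if τ k j i = d then P j i * f (i, 0) else 0) +
        ∑ e : Fin (τbar + 1), if (e : ℕ) = d + 1 then f (j, e) else 0 := by
  simp only [mulVec, dotProduct, augStep, add_mul, sum_add_distrib, Fintype.sum_prod_type,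
    ite_mul, one_mul, zero_mul, ite_and]
  simp [sum_ite_eq', eq_comm]

lemma augState_succ (hx : DelayedIter P τ x) (hτ : ∀ k j i, τ k j i ≤ τbar) (k : ℕ) :
    augState τbar P τ x (k + 1) = augStep τbar P τ k *ᵥ augState τbar P τ x k := by
  ext ⟨j, d⟩
  rw [augStep_mulVec_apply, augState, inFlight_succ]
  congr 1
  · simp [augState, inFlight_zero hx]
  · exact (Fin.sum_ite_val_eq (inFlight P τ x k j) fun h => inFlight_eq_zero hτ k j (by omega)).symm

lemma augState_add (hx : DelayedIter P τ x) (hτ : ∀ k j i, τ k j i ≤ τbar) (k t : ℕ) :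
    augState τbar P τ x (k + t) = augProd τbar P τ t k *ᵥ augState τbar P τ x k := by
  induction t with
  | zero => simp [augProd]
  | succ t ih => rw [← add_assoc, augState_succ hx hτ, ih, mulVec_mulVec, augProd]

lemma augState_zero_apply (j : Fin n) (d : Fin (τbar + 1)) :
    augState τbar P τ x 0 (j, d) = if d = 0 then x 0 j else 0 := by
  simp [augState, inFlight]

lemma sum_augState_zero (f : ℝ → ℝ) (hf : f 0 = 0) :
    ∑ a, f (augState τbar P τ x 0 a) = ∑ j, f (x 0 j) := by
  simp [Fintype.sum_prod_type, augState_zero_apply, apply_ite f, hf]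

lemma sum_augState (hx : DelayedIter P τ x) (hP : P ∈ colStochastic ℝ (Fin n))
    (hτ : ∀ k j i, τ k j i ≤ τbar) (k : ℕ) : ∑ a, augState τbar P τ x k a = ∑ j, x 0 j := by
  rw [← zero_add k, augState_add hx hτ, sum_mulVec_of_mem_colStochastic
    (augProd_mem_colStochastic hP hτ k 0)]
  exact sum_augState_zero id rfl

lemma augState_nonneg (hx : DelayedIter P τ x) (hP : P ∈ colStochastic ℝ (Fin n))
    (hτ : ∀ k j i, τ k j i ≤ τbar) (hx₀ : ∀ j, 0 ≤ x 0 j) (k : ℕ) (a : Fin n × Fin (τbar + 1)) :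
    0 ≤ augState τbar P τ x k a := by
  rw [← zero_add k, augState_add hx hτ]
  refine nonneg_mulVec_of_mem_colStochastic (augProd_mem_colStochastic hP hτ k 0)
    (fun ⟨j, d⟩ => ?_) a
  rw [augState_zero_apply]
  split_ifs
  exacts [hx₀ j, le_rfl]

lemma diag_pow_mul_le (hx : DelayedIter P τ x) (hP : P ∈ colStochastic ℝ (Fin n))
    (hτ : ∀ k j i, τ k j i ≤ τbar) (hτself : ∀ k j, τ k j j = 0) (hx₀ : ∀ j, 0 ≤ x 0 j)
    (k : ℕ) (j : Fin n) : P j j ^ k * x 0 j ≤ x k j := by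
  have hA := augProd_mem_colStochastic hP hτ k 0
  calc P j j ^ k * x 0 j
      ≤ augProd τbar P τ k 0 (j, 0) (j, 0) * augState τbar P τ x 0 (j, 0) := by
        rw [augState_zero_apply, if_pos rfl]
        exact mul_le_mul_of_nonneg_right
          (pow_le_augProd_diag hP hτ hτself (nonneg_of_mem_colStochastic hP) le_rfl k 0) (hx₀ j)
    _ ≤ (augProd τbar P τ k 0 *ᵥ augState τbar P τ x 0) (j, 0) :=
        single_le_sum (f := fun b => augProd τbar P τ k 0 (j, 0) b * augState τbar P τ x 0 b)
          (fun b _ => mul_nonneg (nonneg_of_mem_colStochastic hA)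
            (augState_nonneg hx hP hτ hx₀ 0 b)) (mem_univ _)
    _ = x k j := by rw [← augState_add hx hτ, zero_add, augState_apply_zero hx]

lemma ite_le_augProd (hP : P ∈ colStochastic ℝ (Fin n)) (hτ : ∀ k j i, τ k j i ≤ τbar)
    {δ : ℝ} {L : ℕ} (hrow : ∀ k j b, δ ≤ augProd τbar P τ L k (j, 0) b) (k : ℕ)
    (a b : Fin n × Fin (τbar + 1)) : (if a.2 = 0 then δ else 0) ≤ augProd τbar P τ L k a b := by
  obtain ⟨j, d⟩ := a
  split_ifs with hd
  · obtain rfl : d = 0 := hd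
    exact hrow k j b
  · exact nonneg_of_mem_colStochastic (augProd_mem_colStochastic hP hτ L k)

lemma sum_ite_snd_eq_zero (δ : ℝ) :
    ∑ a : Fin n × Fin (τbar + 1), (if a.2 = 0 then δ else 0) = n * δ := by
  simp [Fintype.sum_prod_type]

lemma natCast_mul_le_one (hP : P ∈ colStochastic ℝ (Fin n)) (hτ : ∀ k j i, τ k j i ≤ τbar)
    {δ : ℝ} {L : ℕ} (hrow : ∀ k j b, δ ≤ augProd τbar P τ L k (j, 0) b) (j : Fin n) :
    n * δ ≤ 1 := by
  rw [← sum_ite_snd_eq_zero (τbar := τbar),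
    ← sum_col_of_mem_colStochastic (augProd_mem_colStochastic hP hτ L 0) (j, 0)]
  exact sum_le_sum fun a _ => ite_le_augProd hP hτ hrow 0 a (j, 0)

lemma mul_sum_le_of_nonneg (hx : DelayedIter P τ x) (hP : P ∈ colStochastic ℝ (Fin n))
    (hτ : ∀ k j i, τ k j i ≤ τbar) {δ : ℝ} {L : ℕ}
    (hrow : ∀ k j b, δ ≤ augProd τbar P τ L k (j, 0) b) (hx₀ : ∀ j, 0 ≤ x 0 j) {k : ℕ}
    (hk : L ≤ k) (j : Fin n) : δ * ∑ i, x 0 i ≤ x k j := by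
  obtain ⟨m, rfl⟩ := Nat.exists_eq_add_of_le' hk
  rw [← augState_apply_zero hx, augState_add hx hτ, ← sum_augState hx hP hτ m, mul_sum]
  exact sum_le_sum fun b _ =>
    mul_le_mul_of_nonneg_right (hrow m j b) (augState_nonneg hx hP hτ hx₀ m b)

lemma abs_le_of_sum_eq_zero (hx : DelayedIter P τ x) (hP : P ∈ colStochastic ℝ (Fin n))
    (hτ : ∀ k j i, τ k j i ≤ τbar) {δ : ℝ} {L : ℕ}
    (hrow : ∀ k j b, δ ≤ augProd τbar P τ L k (j, 0) b) (hx₀ : ∑ i, x 0 i = 0) (k : ℕ)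
    (j : Fin n) : |x k j| ≤ (1 - n * δ) ^ (k / L) * ∑ i, |x 0 i| := by
  set D := fun k => ∑ a, |augState τbar P τ x k a|
  have hmass (k : ℕ) : ∑ a, augState τbar P τ x k a = 0 := (sum_augState hx hP hτ k).trans hx₀
  have hD : Antitone D := antitone_nat_of_succ_le fun k => by
    simpa [D, augState_succ hx hτ] using sum_abs_mulVec_le_of_mem_colStochastic
      (augStep_mem_colStochastic hP hτ k) (w := 0) (fun _ _ => nonneg_of_mem_colStochastic
        (augStep_mem_colStochastic hP hτ k)) (hmass k)
  have hDL (k : ℕ) : D (k + L) ≤ (1 - n * δ) * D k := by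
    simpa [D, augState_add hx hτ, sum_ite_snd_eq_zero] using
      sum_abs_mulVec_le_of_mem_colStochastic (augProd_mem_colStochastic hP hτ L k)
        (ite_le_augProd hP hτ hrow k) (hmass k)
  calc |x k j| = |augState τbar P τ x k (j, 0)| := by rw [augState_apply_zero hx]
    _ ≤ D k := single_le_sum (f := fun a => |augState τbar P τ x k a|)
        (fun _ _ => abs_nonneg _) (mem_univ _)
    _ ≤ (1 - n * δ) ^ (k / L) * D 0 :=
        hD.le_pow_div_mul (sub_nonneg.2 (natCast_mul_le_one hP hτ hrow j)) hDL k
    _ = (1 - n * δ) ^ (k / L) * ∑ i, |x 0 i| := by rw [← sum_augState_zero abs abs_zero]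

lemma sub_const_mul {y z : ℕ → Fin n → ℝ} (hy : DelayedIter P τ y) (hz : DelayedIter P τ z)
    (c : ℝ) :
    DelayedIter P τ fun k j => y k j - c * z k j := by
  intro k j
  simp only [hy k j, hz k j, mul_sum, ← sum_sub_distrib]
  refine sum_congr rfl fun i _ => sum_congr rfl fun s _ => ?_
  split_ifs <;> ring

lemma tendsto_div {y z : ℕ → Fin n → ℝ} (hy : DelayedIter P τ y) (hz : DelayedIter P τ z)
    (hP : P ∈ colStochastic ℝ (Fin n)) (hτ : ∀ k j i, τ k j i ≤ τbar) {δ : ℝ} {L : ℕ}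
    (hδ : 0 < δ) (hL : L ≠ 0) (hrow : ∀ k j b, δ ≤ augProd τbar P τ L k (j, 0) b)
    (hz₀ : ∀ j, 0 ≤ z 0 j) (hzsum : 0 < ∑ i, z 0 i) {μ : ℝ}
    (hμ : ∑ i, (y 0 i - μ * z 0 i) = 0) (j : Fin n) :
    Tendsto (fun k => y k j / z k j) atTop (nhds μ) := by
  have hnδ : 0 < n * δ := mul_pos (Nat.cast_pos.2 j.pos) hδ
  have hrate : 0 ≤ 1 - n * δ := sub_nonneg.2 (natCast_mul_le_one hP hτ hrow j)
  have hzL : 0 < δ * ∑ i, z 0 i := mul_pos hδ hzsum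
  have hclose {k : ℕ} (hk : L ≤ k) : ‖y k j / z k j - μ‖ ≤
      (1 - n * δ) ^ (k / L) * ((∑ i, |y 0 i - μ * z 0 i|) / (δ * ∑ i, z 0 i)) := by
    have hzk := hz.mul_sum_le_of_nonneg hP hτ hrow hz₀ hk j
    have hzpos := hzL.trans_le hzk
    calc ‖y k j / z k j - μ‖ = |y k j - μ * z k j| / z k j := by
          rw [Real.norm_eq_abs, div_sub' hzpos.ne', abs_div, abs_of_pos hzpos, mul_comm]
      _ ≤ ((1 - n * δ) ^ (k / L) * ∑ i, |y 0 i - μ * z 0 i|) / (δ * ∑ i, z 0 i) :=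
          div_le_div₀ (by positivity)
            ((hy.sub_const_mul hz μ).abs_le_of_sum_eq_zero hP hτ hrow hμ k j) hzL hzk
      _ = _ := mul_div_assoc _ _ _
  rw [tendsto_iff_norm_sub_tendsto_zero]
  refine squeeze_zero' (Eventually.of_forall fun _ => norm_nonneg _)
    (eventually_atTop.2 ⟨L, fun k => hclose⟩) ?_
  simpa using (tendsto_pow_div_atTop_nhds_zero hrate (sub_lt_self 1 hnδ) hL).mul_const _

end DelayedIter

theorem statement0_general (n : ℕ)
    (P : Matrix (Fin n) (Fin n) ℝ) (hP : ColStoch P)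
    (hdiag : ∀ j, 0 < P j j)
    (hirr : ∀ j i : Fin n, ∃ m : ℕ, 1 ≤ m ∧ 0 < (P ^ m) j i)
    (τbar : ℕ) (τ : ℕ → Fin n → Fin n → ℕ)
    (hτle : ∀ k j i, τ k j i ≤ τbar)
    (hτself : ∀ k j, τ k j j = 0)
    (y z : ℕ → Fin n → ℝ) (y0 : Fin n → ℝ)
    (hy0 : y 0 = y0) (hz0 : ∀ j, z 0 j = 1)
    (hy : DelayedIter P τ y) (hz : DelayedIter P τ z) :
    (∀ k j, 0 < z k j) ∧
      ∀ j, Tendsto (fun k => y k j / z k j) atTop (nhds ((∑ l, y0 l) / (n : ℝ))) := by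
  have hPs : P ∈ colStochastic ℝ (Fin n) := mem_colStochastic_iff_sum.2 hP
  have hz₀ (j : Fin n) : 0 ≤ z 0 j := (hz0 j).symm ▸ zero_le_one
  refine ⟨fun k j => ?_, fun j => ?_⟩
  · have := hz.diag_pow_mul_le hPs hτle hτself hz₀ k j
    rw [hz0, mul_one] at this
    exact (pow_pos (hdiag j) k).trans_le this
  obtain ⟨δ, hδ, L, hL, hrow⟩ := DelayedIter.exists_le_augProd hPs hdiag
    (fun j i => (hirr j i).imp fun _ => And.right) hτle hτself
  have hn : (n : ℝ) ≠ 0 := Nat.cast_ne_zero.2 j.pos.ne'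
  refine hy.tendsto_div hz hPs hτle hδ hL.ne' hrow hz₀ (by simp [hz0, j.pos]) ?_ j
  simp only [hy0, hz0, mul_one, sum_sub_distrib, sum_const, card_univ, Fintype.card_fin,
    nsmul_eq_mul]
  rw [mul_div_cancel₀ _ hn, sub_self]

theorem statement0 (n : ℕ) (hn : 2 ≤ n)
    (P : Matrix (Fin n) (Fin n) ℝ) (hP : ColStoch P)
    (hdiag : ∀ j, 0 < P j j)
    (hirr : ∀ j i : Fin n, ∃ m : ℕ, 1 ≤ m ∧ 0 < (P ^ m) j i)
    (τbar : ℕ) (τ : ℕ → Fin n → Fin n → ℕ)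
    (hτle : ∀ k j i, τ k j i ≤ τbar)
    (hτself : ∀ k j, τ k j j = 0)
    (y z : ℕ → Fin n → ℝ) (y0 : Fin n → ℝ)
    (hy0 : y 0 = y0) (hz0 : ∀ j, z 0 j = 1)
    (hy : DelayedIter P τ y) (hz : DelayedIter P τ z) :
    (∀ k j, 0 < z k j) ∧
      ∀ j, Tendsto (fun k => y k j / z k j) atTop (nhds ((∑ l, y0 l) / (n : ℝ))) :=
  statement0_general n P hP hdiag hirr τbar τ hτle hτself y z y0 hy0 hz0 hy hz
end

section
/- Let n ≥ 2, let P be an n×n column stochastic matrix with P_{jj} > 0 for all j and such that for every pair (j, i) there exists m ≥ 1 with (P^m)_{ji} > 0, let τ̄ ∈ ℕ, and let τ(k, j, i) ∈ {0, …, τ̄} be delay functions with τ(k, j, j) = 0. Then for any k ≥ 0 and any integer ℓ ≥ τ̄ + 1, the word B = P̄[k+ℓ] · P̄[k+ℓ−1] ⋯ P̄[k+1] (a product of ℓ consecutive augmented matrices) is SIA: B is column stochastic and the powers B^m converge as m → ∞ to a matrix of the form c·𝟙ᵀ for some nonnegative vector c. -/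
open Matrix Filter

/-- The augmented `(τ̄+1)n × (τ̄+1)n` matrix `P̄[k]`, indexed by pairs `(r, j)` where
`r ∈ Fin (τ̄+1)` is the block (virtual-delay) index and `j ∈ Fin n` is the node index.
Block column `0` contains the blocks `P_r[k]` (with `P_r[k](j,i) = P(j,i)` if
`τ(k,j,i) = r` and `0` otherwise); the block in block-row `s-1`, block-column `s`
is the identity for `s = 1, …, τ̄`; all other blocks are zero. -/
def AugMat (n τbar : ℕ) (P : Matrix (Fin n) (Fin n) ℝ)
    (τ : ℕ → Fin n → Fin n → ℕ) (k : ℕ) :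
    Matrix (Fin (τbar + 1) × Fin n) (Fin (τbar + 1) × Fin n) ℝ :=
  fun q p =>
    if p.1.val = 0 then (if τ k q.2 p.2 = q.1.val then P q.2 p.2 else 0)
    else if q.1.val + 1 = p.1.val ∧ q.2 = p.2 then 1 else 0

/-- The word `P̄[k+ℓ] ⋯ P̄[k+2] ⬝ P̄[k+1]` of `ℓ` consecutive augmented matrices. -/
def Word (n τbar : ℕ) (P : Matrix (Fin n) (Fin n) ℝ)
    (τ : ℕ → Fin n → Fin n → ℕ) (k : ℕ) :
    ℕ → Matrix (Fin (τbar + 1) × Fin n) (Fin (τbar + 1) × Fin n) ℝ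
  | 0 => 1
  | ℓ + 1 => AugMat n τbar P τ (k + ℓ + 1) * Word n τbar P τ k ℓ

/-- A column stochastic matrix `B` is SIA if its powers `B^m` converge (entrywise)
to a matrix of the form `c ⬝ 𝟙ᵀ` for some nonnegative vector `c`. -/
def IsSIA {N : Type*} [Fintype N] [DecidableEq N] (B : Matrix N N ℝ) : Prop :=
  ColStoch B ∧ ∃ c : N → ℝ, (∀ j, 0 ≤ c j) ∧
    Tendsto (fun m => B ^ m) atTop (nhds (Matrix.of fun j _ => c j))

set_option linter.unusedSectionVars false
set_option linter.unusedVariables false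

section Analytic

variable {N : Type*} [Fintype N] [DecidableEq N]

lemma colStoch_one : ColStoch (1 : Matrix N N ℝ) := by
  constructor
  · intro j i
    by_cases h : j = i <;> simp [Matrix.one_apply, h]
  · intro i; simp [Matrix.one_apply]

lemma colStoch_mul {A B : Matrix N N ℝ} (hA : ColStoch A) (hB : ColStoch B) :
    ColStoch (A * B) := by
  constructor
  · intro j i
    rw [Matrix.mul_apply]
    exact Finset.sum_nonneg fun r _ => mul_nonneg (hA.1 j r) (hB.1 r i)
  · intro i
    have : ∑ j, (A * B) j i = ∑ r, (∑ j, A j r) * B r i := by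
      simp_rw [Matrix.mul_apply, Finset.sum_mul]
      rw [Finset.sum_comm]
    rw [this]
    simp_rw [hA.2]
    simpa using hB.2 i

lemma colStoch_pow {A : Matrix N N ℝ} (hA : ColStoch A) (m : ℕ) : ColStoch (A ^ m) := by
  induction m with
  | zero => simpa using (colStoch_one : ColStoch (1 : Matrix N N ℝ))
  | succ m ih => rw [pow_succ]; exact colStoch_mul ih hA

lemma colStoch_entry_le_one {A : Matrix N N ℝ} (hA : ColStoch A) (q p : N) : A q p ≤ 1 := by
  rw [← hA.2 p]
  exact Finset.single_le_sum (fun j _ => hA.1 j p) (Finset.mem_univ q)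

lemma sum_mulVec {A : Matrix N N ℝ} (hA : ColStoch A) (z : N → ℝ) :
    ∑ q, A.mulVec z q = ∑ p, z p := by
  simp_rw [Matrix.mulVec, dotProduct]
  rw [Finset.sum_comm]
  simp_rw [← Finset.sum_mul, hA.2, one_mul]

lemma sum_abs_mulVec_le {A : Matrix N N ℝ} (hA : ColStoch A) (z : N → ℝ) :
    ∑ q, |A.mulVec z q| ≤ ∑ p, |z p| := by
  have h1 : ∀ q, |A.mulVec z q| ≤ ∑ p, A q p * |z p| := by
    intro q
    calc |A.mulVec z q| ≤ ∑ p, |A q p * z p| := Finset.abs_sum_le_sum_abs _ _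
    _ = ∑ p, A q p * |z p| := by
        refine Finset.sum_congr rfl fun p _ => ?_
        rw [abs_mul, abs_of_nonneg (hA.1 q p)]
  calc ∑ q, |A.mulVec z q| ≤ ∑ q, ∑ p, A q p * |z p| :=
        Finset.sum_le_sum fun q _ => h1 q
  _ = ∑ p, (∑ q, A q p) * |z p| := by rw [Finset.sum_comm]; simp_rw [Finset.sum_mul]
  _ = ∑ p, |z p| := by simp_rw [hA.2, one_mul]

lemma mulVec_nonneg {A : Matrix N N ℝ} (hA : ColStoch A) {z : N → ℝ} (hz : ∀ p, 0 ≤ z p)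
    (q : N) : 0 ≤ A.mulVec z q :=
  Finset.sum_nonneg fun p _ => mul_nonneg (hA.1 q p) (hz p)

lemma colStoch_contract {A : Matrix N N ℝ} (hA : ColStoch A) (q0 : N) (δ : ℝ)
    (hδ : ∀ p, δ ≤ A q0 p) (z : N → ℝ) (hz : ∑ p, z p = 0) :
    ∑ q, |A.mulVec z q| ≤ (1 - δ) * ∑ p, |z p| := by
  classical
  set u : N → ℝ := fun p => max (z p) 0 with hu
  set v : N → ℝ := fun p => max (-z p) 0 with hv
  have hu0 : ∀ p, 0 ≤ u p := fun p => le_max_right _ _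
  have hv0 : ∀ p, 0 ≤ v p := fun p => le_max_right _ _
  have huv : z = u - v := by
    funext p
    rcases le_total (z p) 0 with h | h
    · simp only [Pi.sub_apply, hu, hv]
      rw [max_eq_right h, max_eq_left (neg_nonneg.mpr h)]
      ring
    · simp only [Pi.sub_apply, hu, hv]
      rw [max_eq_left h, max_eq_right (neg_nonpos.mpr h)]
      ring
  have habs : ∀ p, |z p| = u p + v p := by
    intro p
    rcases le_total (z p) 0 with h | h
    · simp [hu, hv, abs_of_nonpos h, max_eq_right h, max_eq_left (neg_nonneg.mpr h)]
    · simp [hu, hv, abs_of_nonneg h, max_eq_left h, max_eq_right (neg_nonpos.mpr h)]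
  have hSuv : ∑ p, u p = ∑ p, v p := by
    have : ∑ p, (u p - v p) = 0 := by rw [← hz]; simp [huv]
    rw [Finset.sum_sub_distrib] at this
    linarith
  set S := ∑ p, u p with hS
  have hmv : A.mulVec z = A.mulVec u - A.mulVec v := by
    rw [huv, Matrix.mulVec_sub]
  have ha0 : ∀ q, 0 ≤ A.mulVec u q := mulVec_nonneg hA hu0
  have hb0 : ∀ q, 0 ≤ A.mulVec v q := mulVec_nonneg hA hv0
  have hsa : ∑ q, A.mulVec u q = S := sum_mulVec hA u
  have hsb : ∑ q, A.mulVec v q = S := by rw [sum_mulVec hA v, ← hSuv]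
  have habs2 : ∀ q, |A.mulVec z q| =
      A.mulVec u q + A.mulVec v q - 2 * min (A.mulVec u q) (A.mulVec v q) := by
    intro q
    rw [hmv]
    rcases le_total (A.mulVec u q) (A.mulVec v q) with h | h
    · rw [min_eq_left h]
      simp only [Pi.sub_apply]
      rw [abs_of_nonpos (by linarith)]
      ring
    · rw [min_eq_right h]
      simp only [Pi.sub_apply]
      rw [abs_of_nonneg (by linarith)]
      ring
  have hq0u : δ * S ≤ A.mulVec u q0 := by
    calc δ * S = ∑ p, δ * u p := by rw [Finset.mul_sum]
    _ ≤ ∑ p, A q0 p * u p :=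
        Finset.sum_le_sum fun p _ => mul_le_mul_of_nonneg_right (hδ p) (hu0 p)
    _ = A.mulVec u q0 := rfl
  have hq0v : δ * S ≤ A.mulVec v q0 := by
    calc δ * S = δ * ∑ p, v p := by rw [hSuv]
    _ = ∑ p, δ * v p := by rw [Finset.mul_sum]
    _ ≤ ∑ p, A q0 p * v p :=
        Finset.sum_le_sum fun p _ => mul_le_mul_of_nonneg_right (hδ p) (hv0 p)
    _ = A.mulVec v q0 := rfl
  have hmin : δ * S ≤ ∑ q, min (A.mulVec u q) (A.mulVec v q) := by
    calc δ * S ≤ min (A.mulVec u q0) (A.mulVec v q0) := le_min hq0u hq0v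
    _ ≤ ∑ q, min (A.mulVec u q) (A.mulVec v q) :=
        Finset.single_le_sum (fun q _ => le_min (ha0 q) (hb0 q)) (Finset.mem_univ q0)
  have hzabs : ∑ p, |z p| = 2 * S := by
    simp_rw [habs]
    rw [Finset.sum_add_distrib, ← hSuv]
    ring
  calc ∑ q, |A.mulVec z q|
      = ∑ q, (A.mulVec u q + A.mulVec v q - 2 * min (A.mulVec u q) (A.mulVec v q)) := by
        exact Finset.sum_congr rfl fun q _ => habs2 q
  _ = 2 * S - 2 * ∑ q, min (A.mulVec u q) (A.mulVec v q) := by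
      rw [Finset.sum_sub_distrib, Finset.sum_add_distrib, hsa, hsb, ← Finset.mul_sum]
      ring
  _ ≤ 2 * S - 2 * (δ * S) := by linarith
  _ = (1 - δ) * ∑ p, |z p| := by rw [hzabs]; ring

end Analytic


section Conv

variable {N : Type*} [Fintype N] [DecidableEq N]

lemma word_contract {W : Matrix N N ℝ} (hW : ColStoch W) (m0 : ℕ) (hm0 : 0 < m0)
    (q0 : N) (δ : ℝ) (hδ : ∀ p, δ ≤ (W ^ m0) q0 p) (m : ℕ) (z : N → ℝ)
    (hz : ∑ p, z p = 0) :
    ∑ q, |(W ^ m).mulVec z q| ≤ (1 - δ) ^ (m / m0) * ∑ p, |z p| := by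
  have hδ1 : δ ≤ 1 := le_trans (hδ q0) (colStoch_entry_le_one (colStoch_pow hW m0) q0 q0)
  have h1δ : 0 ≤ 1 - δ := by linarith
  -- powers of W^m0 contract
  have pw : ∀ (a : ℕ) (z : N → ℝ), ∑ p, z p = 0 →
      ∑ q, |((W ^ m0) ^ a).mulVec z q| ≤ (1 - δ) ^ a * ∑ p, |z p| := by
    intro a
    induction a with
    | zero => intro z hz; simp [Matrix.one_mulVec]
    | succ a ih =>
      intro z hz
      have hC : ColStoch (W ^ m0) := colStoch_pow hW m0
      have hz' : ∑ p, (W ^ m0).mulVec z p = 0 := by rw [sum_mulVec hC z, hz]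
      have step : ∑ q, |(W ^ m0).mulVec z q| ≤ (1 - δ) * ∑ p, |z p| :=
        colStoch_contract hC q0 δ hδ z hz
      calc ∑ q, |((W ^ m0) ^ (a + 1)).mulVec z q|
          = ∑ q, |((W ^ m0) ^ a).mulVec ((W ^ m0).mulVec z) q| := by
            simp_rw [Matrix.mulVec_mulVec, ← pow_succ]
      _ ≤ (1 - δ) ^ a * ∑ q, |(W ^ m0).mulVec z q| := ih _ hz'
      _ ≤ (1 - δ) ^ a * ((1 - δ) * ∑ p, |z p|) :=
            mul_le_mul_of_nonneg_left step (pow_nonneg h1δ a)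
      _ = (1 - δ) ^ (a + 1) * ∑ p, |z p| := by ring
  have hm : m = m0 * (m / m0) + m % m0 := (Nat.div_add_mod m m0).symm
  have hWm : W ^ m = (W ^ m0) ^ (m / m0) * W ^ (m % m0) := by
    rw [← pow_mul, ← pow_add, ← hm]
  have hz' : ∑ p, (W ^ (m % m0)).mulVec z p = 0 := by
    rw [sum_mulVec (colStoch_pow hW _) z, hz]
  calc ∑ q, |(W ^ m).mulVec z q|
      = ∑ q, |((W ^ m0) ^ (m / m0)).mulVec ((W ^ (m % m0)).mulVec z) q| := by
        rw [hWm]; simp_rw [Matrix.mulVec_mulVec]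
  _ ≤ (1 - δ) ^ (m / m0) * ∑ q, |(W ^ (m % m0)).mulVec z q| := pw _ _ hz'
  _ ≤ (1 - δ) ^ (m / m0) * ∑ p, |z p| :=
      mul_le_mul_of_nonneg_left (sum_abs_mulVec_le (colStoch_pow hW _) z)
        (pow_nonneg h1δ _)

lemma exists_sia_limit [Nonempty N] {W : Matrix N N ℝ} (hW : ColStoch W)
    (m0 : ℕ) (hm0 : 0 < m0) (q0 : N) (hpos : ∀ p, 0 < (W ^ m0) q0 p) :
    ∃ c : N → ℝ, (∀ j, 0 ≤ c j) ∧
      Tendsto (fun m => W ^ m) atTop (nhds (Matrix.of fun j _ => c j)) := by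
  classical
  set δ : ℝ := Finset.univ.inf' Finset.univ_nonempty (fun p => (W ^ m0) q0 p) with hδdef
  have hδle : ∀ p, δ ≤ (W ^ m0) q0 p := fun p =>
    Finset.inf'_le _ (Finset.mem_univ p)
  have hδpos : 0 < δ := by
    rw [hδdef, Finset.lt_inf'_iff]
    exact fun p _ => hpos p
  have hδ1 : δ ≤ 1 := le_trans (hδle q0) (colStoch_entry_le_one (colStoch_pow hW m0) q0 q0)
  -- entrywise bound
  have ent : ∀ (m : ℕ) (z : N → ℝ), ∑ p, z p = 0 → ∀ q,
      |(W ^ m).mulVec z q| ≤ (1 - δ) ^ (m / m0) * ∑ p, |z p| := by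
    intro m z hz q
    refine le_trans ?_ (word_contract hW m0 hm0 q0 δ hδle m z hz)
    exact Finset.single_le_sum (f := fun q' => |(W ^ m).mulVec z q'|) (fun q' _ => abs_nonneg _) (Finset.mem_univ q)
  -- claim A: powers differences
  have claimA : ∀ (m t : ℕ) (q p : N),
      |(W ^ (m + t)) q p - (W ^ m) q p| ≤ 2 * (1 - δ) ^ (m / m0) := by
    intro m t q p
    set z : N → ℝ := fun r => (W ^ t) r p - (if r = p then 1 else 0) with hzdef
    have hz : ∑ r, z r = 0 := by
      rw [hzdef]
      rw [Finset.sum_sub_distrib, (colStoch_pow hW t).2 p]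
      simp
    have hmv : (W ^ m).mulVec z q = (W ^ (m + t)) q p - (W ^ m) q p := by
      simp only [Matrix.mulVec, dotProduct, hzdef, mul_sub, Finset.sum_sub_distrib,
        mul_ite, mul_one, mul_zero, Finset.sum_ite_eq', Finset.mem_univ, if_true]
      rw [pow_add, Matrix.mul_apply]
    have hzsum : ∑ r, |z r| ≤ 2 := by
      have hle : ∀ r : N, |z r| ≤ |(W ^ t) r p| + |(if r = p then (1:ℝ) else 0)| := by
        intro r; rw [hzdef]; exact abs_sub _ _
      calc ∑ r, |z r| ≤ ∑ r, (|(W ^ t) r p| + |(if r = p then (1:ℝ) else 0)|) :=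
            Finset.sum_le_sum fun r _ => hle r
      _ = (∑ r, (W ^ t) r p) + ∑ r, |(if r = p then (1:ℝ) else 0)| := by
            rw [Finset.sum_add_distrib]
            congr 1
            exact Finset.sum_congr rfl fun r _ => abs_of_nonneg ((colStoch_pow hW t).1 r p)
      _ = 1 + 1 := by
            rw [(colStoch_pow hW t).2 p]
            congr 1
            simp [apply_ite]
      _ = 2 := by norm_num
    calc |(W ^ (m + t)) q p - (W ^ m) q p| = |(W ^ m).mulVec z q| := by rw [hmv]
    _ ≤ (1 - δ) ^ (m / m0) * ∑ r, |z r| := ent m z hz q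
    _ ≤ (1 - δ) ^ (m / m0) * 2 :=
        mul_le_mul_of_nonneg_left hzsum (pow_nonneg (by linarith) _)
    _ = 2 * (1 - δ) ^ (m / m0) := by ring
  -- claim B: column differences
  have claimB : ∀ (m : ℕ) (q p p' : N),
      |(W ^ m) q p - (W ^ m) q p'| ≤ 2 * (1 - δ) ^ (m / m0) := by
    intro m q p p'
    set z : N → ℝ := fun r => (if r = p then (1:ℝ) else 0) - (if r = p' then 1 else 0) with hzdef
    have hz : ∑ r, z r = 0 := by rw [hzdef]; rw [Finset.sum_sub_distrib]; simp
    have hmv : (W ^ m).mulVec z q = (W ^ m) q p - (W ^ m) q p' := by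
      simp only [Matrix.mulVec, dotProduct, hzdef, mul_sub, Finset.sum_sub_distrib,
        mul_ite, mul_one, mul_zero, Finset.sum_ite_eq', Finset.mem_univ, if_true]
    have hzsum : ∑ r, |z r| ≤ 2 := by
      have hle : ∀ r : N, |z r| ≤ |(if r = p then (1:ℝ) else 0)| + |(if r = p' then (1:ℝ) else 0)| := by
        intro r; rw [hzdef]; exact abs_sub _ _
      calc ∑ r, |z r| ≤ ∑ r, (|(if r = p then (1:ℝ) else 0)| + |(if r = p' then (1:ℝ) else 0)|) :=
            Finset.sum_le_sum fun r _ => hle r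
      _ = 1 + 1 := by
            rw [Finset.sum_add_distrib]
            congr 1 <;> simp [apply_ite]
      _ = 2 := by norm_num
    calc |(W ^ m) q p - (W ^ m) q p'| = |(W ^ m).mulVec z q| := by rw [hmv]
    _ ≤ (1 - δ) ^ (m / m0) * ∑ r, |z r| := ent m z hz q
    _ ≤ (1 - δ) ^ (m / m0) * 2 :=
        mul_le_mul_of_nonneg_left hzsum (pow_nonneg (by linarith) _)
    _ = 2 * (1 - δ) ^ (m / m0) := by ring
  -- the bound tends to zero
  have hdiv : Tendsto (fun m : ℕ => m / m0) atTop atTop := by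
    apply Filter.tendsto_atTop_atTop.mpr
    intro b
    exact ⟨m0 * b, fun m hm => (Nat.le_div_iff_mul_le hm0).mpr (by rw [Nat.mul_comm] at hm; exact hm)⟩
  have hgeo : Tendsto (fun a : ℕ => (1 - δ) ^ a) atTop (nhds 0) :=
    tendsto_pow_atTop_nhds_zero_of_lt_one (by linarith) (by linarith)
  have hz0 : Tendsto (fun m : ℕ => 2 * (1 - δ) ^ (m / m0)) atTop (nhds 0) := by
    have := (hgeo.comp hdiv).const_mul (2:ℝ)
    simpa using this
  -- Cauchy and limit
  set p0 : N := Classical.arbitrary N with hp0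
  have hcauchy : ∀ q : N, CauchySeq (fun m => (W ^ m) q p0) := by
    intro q
    apply Metric.cauchySeq_iff'.mpr
    intro ε hε
    obtain ⟨M, hM⟩ := (Metric.tendsto_atTop.mp hz0 ε hε)
    refine ⟨M, fun m hm => ?_⟩
    have h1 : |(W ^ m) q p0 - (W ^ M) q p0| ≤ 2 * (1 - δ) ^ (M / m0) := by
      have := claimA M (m - M) q p0
      rwa [Nat.add_sub_cancel' hm] at this
    have h2 : 2 * (1 - δ) ^ (M / m0) < ε := by
      have := hM M le_rfl
      rw [Real.dist_eq, sub_zero] at this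
      calc 2 * (1 - δ) ^ (M / m0) ≤ |2 * (1 - δ) ^ (M / m0)| := le_abs_self _
      _ < ε := this
    rw [Real.dist_eq]
    exact lt_of_le_of_lt h1 h2
  have hlim : ∀ q : N, ∃ L : ℝ, Tendsto (fun m => (W ^ m) q p0) atTop (nhds L) :=
    fun q => cauchySeq_tendsto_of_complete (hcauchy q)
  choose c hc using hlim
  refine ⟨c, ?_, ?_⟩
  · intro q
    exact ge_of_tendsto (hc q) (Filter.Eventually.of_forall fun m => (colStoch_pow hW m).1 q p0)
  · apply tendsto_pi_nhds.mpr
    intro q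
    apply tendsto_pi_nhds.mpr
    intro p
    have hd : Tendsto (fun m => (W ^ m) q p - (W ^ m) q p0) atTop (nhds 0) := by
      apply squeeze_zero_norm (fun m => ?_) hz0
      exact claimB m q p p0
    have := (hc q).add hd
    rw [add_zero] at this
    have heq : (fun m => (W ^ m) q p0 + ((W ^ m) q p - (W ^ m) q p0)) = fun m => (W ^ m) q p := by
      funext m; ring
    rw [heq] at this
    simpa using this

end Conv


section Graph

variable {n τbar : ℕ} {P : Matrix (Fin n) (Fin n) ℝ} {τ : ℕ → Fin n → Fin n → ℕ}

lemma aug_colStoch (hP : ColStoch P) (hτle : ∀ k j i, τ k j i ≤ τbar) (k : ℕ) :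
    ColStoch (AugMat n τbar P τ k) := by
  constructor
  · intro q p
    unfold AugMat
    split_ifs with h1 h2 h3
    · exact hP.1 _ _
    · exact le_refl 0
    · exact zero_le_one
    · exact le_refl 0
  · intro p
    rw [Fintype.sum_prod_type]
    by_cases hp : p.1.val = 0
    · have hinner : ∀ j : Fin n,
          (∑ r : Fin (τbar + 1), if τ k j p.2 = r.val then P j p.2 else 0) = P j p.2 := by
        intro j
        rw [Finset.sum_eq_single (⟨τ k j p.2, Nat.lt_succ_of_le (hτle k j p.2)⟩ : Fin (τbar+1))]
        · simp
        · intro b _ hb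
          rw [if_neg]
          intro h
          exact hb (Fin.ext h.symm)
        · intro h; exact absurd (Finset.mem_univ _) h
      calc ∑ r : Fin (τbar+1), ∑ j, AugMat n τbar P τ k (r, j) p
          = ∑ j, ∑ r : Fin (τbar+1), (if τ k j p.2 = r.val then P j p.2 else 0) := by
            rw [Finset.sum_comm]
            refine Finset.sum_congr rfl fun j _ => Finset.sum_congr rfl fun r _ => ?_
            simp [AugMat, hp]
      _ = ∑ j, P j p.2 := Finset.sum_congr rfl fun j _ => hinner j
      _ = 1 := hP.2 p.2
    · have hp1 : p.1.val - 1 < τbar + 1 := by omega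
      have hinner : ∀ r : Fin (τbar+1),
          (∑ j, AugMat n τbar P τ k (r, j) p) = if r.val + 1 = p.1.val then (1:ℝ) else 0 := by
        intro r
        by_cases hr : r.val + 1 = p.1.val
        · simp [AugMat, hp, hr]
        · simp [AugMat, hp, hr]
      simp_rw [hinner]
      rw [Finset.sum_eq_single (⟨p.1.val - 1, hp1⟩ : Fin (τbar+1))]
      · rw [if_pos]; show p.1.val - 1 + 1 = p.1.val; omega
      · intro b _ hb
        rw [if_neg]
        intro h
        apply hb
        apply Fin.ext
        show b.val = p.1.val - 1
        omega
      · intro h; exact absurd (Finset.mem_univ _) h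

lemma word_colStoch (hP : ColStoch P) (hτle : ∀ k j i, τ k j i ≤ τbar) (k : ℕ) :
    ∀ ℓ, ColStoch (Word n τbar P τ k ℓ)
  | 0 => by
      show ColStoch (1 : Matrix (Fin (τbar+1) × Fin n) _ ℝ)
      exact colStoch_one
  | (ℓ + 1) => by
      show ColStoch (AugMat n τbar P τ (k + ℓ + 1) * Word n τbar P τ k ℓ)
      exact colStoch_mul (aug_colStoch hP hτle _) (word_colStoch hP hτle k ℓ)

lemma mul_entry_pos {N : Type*} [Fintype N] {A B : Matrix N N ℝ}
    (hA : ∀ q p, 0 ≤ A q p) (hB : ∀ q p, 0 ≤ B q p)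
    {q p : N} (x : N) (h1 : 0 < A q x) (h2 : 0 < B x p) : 0 < (A * B) q p := by
  rw [Matrix.mul_apply]
  exact Finset.sum_pos' (fun r _ => mul_nonneg (hA q r) (hB r p))
    ⟨x, Finset.mem_univ x, mul_pos h1 h2⟩

lemma word_down (hP : ColStoch P) (hdiag : ∀ j, 0 < P j j)
    (hτle : ∀ k j i, τ k j i ≤ τbar) (hτself : ∀ k j, τ k j j = 0) :
    ∀ (ℓ k : ℕ) (r : Fin (τbar+1)) (i : Fin n),
      0 < Word n τbar P τ k ℓ
        (⟨r.val - ℓ, lt_of_le_of_lt (Nat.sub_le _ _) r.isLt⟩, i) (r, i) := by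
  intro ℓ
  induction ℓ with
  | zero =>
    intro k r i
    rw [show (⟨r.val - 0, lt_of_le_of_lt (Nat.sub_le r.val 0) r.isLt⟩ : Fin (τbar+1)) = r
      from Fin.ext (Nat.sub_zero _)]
    show 0 < (1 : Matrix (Fin (τbar+1) × Fin n) _ ℝ) (r, i) (r, i)
    rw [Matrix.one_apply_eq]
    norm_num
  | succ ℓ ih =>
    intro k r i
    show 0 < (AugMat n τbar P τ (k + ℓ + 1) * Word n τbar P τ k ℓ) _ _
    apply mul_entry_pos (aug_colStoch hP hτle _).1 (word_colStoch hP hτle k ℓ).1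
      ((⟨r.val - ℓ, lt_of_le_of_lt (Nat.sub_le _ _) r.isLt⟩ : Fin (τbar+1)), i)
    · unfold AugMat
      by_cases hr : r.val ≤ ℓ
      · have h0 : r.val - ℓ = 0 := by omega
        have h0' : r.val - (ℓ + 1) = 0 := by omega
        rw [if_pos h0, if_pos]
        · exact hdiag i
        · show τ (k + ℓ + 1) i i = r.val - (ℓ + 1)
          rw [hτself, h0']
      · rw [if_neg (by show ¬(r.val - ℓ = 0); omega), if_pos]
        · norm_num
        · constructor
          · show r.val - (ℓ + 1) + 1 = r.val - ℓ
            omega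
          · rfl
    · exact ih k r i

lemma word_down0 (hP : ColStoch P) (hdiag : ∀ j, 0 < P j j)
    (hτle : ∀ k j i, τ k j i ≤ τbar) (hτself : ∀ k j, τ k j j = 0)
    (ℓ k : ℕ) (r : Fin (τbar+1)) (i : Fin n) (hr : r.val ≤ ℓ) :
    0 < Word n τbar P τ k ℓ ((0 : Fin (τbar+1)), i) (r, i) := by
  have := word_down hP hdiag hτle hτself ℓ k r i
  have he : ((⟨r.val - ℓ, lt_of_le_of_lt (Nat.sub_le _ _) r.isLt⟩ : Fin (τbar+1)), i)
      = ((0 : Fin (τbar+1)), i) := by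
    ext
    · show r.val - ℓ = (0 : Fin (τbar+1)).val
      simp [Nat.sub_eq_zero_of_le hr]
    · rfl
  rwa [he] at this

lemma word_succ_right : ∀ (ℓ k : ℕ),
    Word n τbar P τ k (ℓ + 1) = Word n τbar P τ (k + 1) ℓ * AugMat n τbar P τ (k + 1) := by
  intro ℓ
  induction ℓ with
  | zero =>
    intro k
    show AugMat n τbar P τ (k + 0 + 1) * Word n τbar P τ k 0 = _
    show AugMat n τbar P τ (k + 0 + 1) * 1 = (1 : Matrix _ _ ℝ) * AugMat n τbar P τ (k + 1)
    rw [Matrix.mul_one, Matrix.one_mul]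
  | succ ℓ ih =>
    intro k
    show AugMat n τbar P τ (k + (ℓ + 1) + 1) * Word n τbar P τ k (ℓ + 1) = _
    rw [ih k]
    rw [← Matrix.mul_assoc]
    have harith : k + (ℓ + 1) + 1 = k + 1 + ℓ + 1 := by omega
    rw [harith]
    rfl

lemma word_step_pos (hP : ColStoch P) (hdiag : ∀ j, 0 < P j j)
    (hτle : ∀ k j i, τ k j i ≤ τbar) (hτself : ∀ k j, τ k j j = 0)
    {j i : Fin n} (hji : 0 < P j i) {ℓ : ℕ} (hℓ : τbar + 1 ≤ ℓ) (k : ℕ) :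
    0 < Word n τbar P τ k ℓ ((0 : Fin (τbar+1)), j) ((0 : Fin (τbar+1)), i) := by
  obtain ⟨ℓ', rfl⟩ : ∃ ℓ', ℓ = ℓ' + 1 := ⟨ℓ - 1, by omega⟩
  rw [word_succ_right]
  apply mul_entry_pos (word_colStoch hP hτle (k+1) ℓ').1 (aug_colStoch hP hτle (k+1)).1
    ((⟨τ (k+1) j i, Nat.lt_succ_of_le (hτle (k+1) j i)⟩ : Fin (τbar+1)), j)
  · refine word_down0 hP hdiag hτle hτself ℓ' (k+1) _ j ?_
    show τ (k+1) j i ≤ ℓ'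
    exact le_trans (hτle (k+1) j i) (by omega)
  · unfold AugMat
    have h0 : (((0 : Fin (τbar+1)), i) : Fin (τbar+1) × Fin n).1.val = 0 := by simp
    rw [if_pos h0, if_pos rfl]
    exact hji

end Graph


section Main

variable {n τbar : ℕ} {P : Matrix (Fin n) (Fin n) ℝ} {τ : ℕ → Fin n → Fin n → ℕ}

lemma pow_block_pos (hP : ColStoch P) (hdiag : ∀ j, 0 < P j j)
    (hτle : ∀ k j i, τ k j i ≤ τbar) (hτself : ∀ k j, τ k j j = 0)
    (k ℓ : ℕ) (hℓ : τbar + 1 ≤ ℓ) :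
    ∀ (m : ℕ) (j i : Fin n), 0 < (P ^ m) j i →
      0 < (Word n τbar P τ k ℓ ^ m) ((0 : Fin (τbar+1)), j) ((0 : Fin (τbar+1)), i) := by
  intro m
  induction m with
  | zero =>
    intro j i hpos
    rw [pow_zero] at hpos ⊢
    have hji : j = i := by
      by_contra h
      rw [Matrix.one_apply_ne h] at hpos
      exact lt_irrefl 0 hpos
    subst hji
    rw [Matrix.one_apply_eq]
    norm_num
  | succ m ih =>
    intro j i hpos
    rw [pow_succ'] at hpos
    rw [Matrix.mul_apply] at hpos
    have hex : ∃ l, 0 < P j l * (P ^ m) l i := by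
      by_contra hcon
      push_neg at hcon
      have : ∑ l, P j l * (P ^ m) l i ≤ 0 := Finset.sum_nonpos fun l _ => hcon l
      linarith
    obtain ⟨l, hl⟩ := hex
    have h1 : 0 < P j l := by
      rcases (hP.1 j l).lt_or_eq with h | h
      · exact h
      · exfalso; rw [← h, zero_mul] at hl; exact lt_irrefl 0 hl
    have h2 : 0 < (P ^ m) l i := by
      rcases ((colStoch_pow hP m).1 l i).lt_or_eq with h | h
      · exact h
      · exfalso; rw [← h, mul_zero] at hl; exact lt_irrefl 0 hl
    rw [pow_succ']
    exact mul_entry_pos (word_colStoch hP hτle k ℓ).1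
      (colStoch_pow (word_colStoch hP hτle k ℓ) m).1 ((0 : Fin (τbar+1)), l)
      (word_step_pos hP hdiag hτle hτself h1 hℓ k) (ih l i h2)

lemma pow_pad (hP : ColStoch P) (hdiag : ∀ j, 0 < P j j)
    (hτle : ∀ k j i, τ k j i ≤ τbar) (hτself : ∀ k j, τ k j j = 0)
    (k ℓ : ℕ) (j i : Fin n) :
    ∀ (m m' : ℕ), m ≤ m' →
      0 < (Word n τbar P τ k ℓ ^ m) ((0 : Fin (τbar+1)), j) ((0 : Fin (τbar+1)), i) →
      0 < (Word n τbar P τ k ℓ ^ m') ((0 : Fin (τbar+1)), j) ((0 : Fin (τbar+1)), i) := by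
  intro m m'
  induction m' with
  | zero => intro hm h; have : m = 0 := Nat.le_zero.mp hm; subst this; exact h
  | succ m' ih =>
    intro hm h
    by_cases hc : m = m' + 1
    · subst hc; exact h
    · have hm' : m ≤ m' := by omega
      rw [pow_succ']
      exact mul_entry_pos (word_colStoch hP hτle k ℓ).1
        (colStoch_pow (word_colStoch hP hτle k ℓ) m').1 ((0 : Fin (τbar+1)), j)
        (word_down0 hP hdiag hτle hτself ℓ k 0 j (by simp)) (ih hm' h)

end Main

theorem statement1 (n : ℕ) (hn : 2 ≤ n)
    (P : Matrix (Fin n) (Fin n) ℝ) (hP : ColStoch P)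
    (hdiag : ∀ j, 0 < P j j)
    (hirr : ∀ j i : Fin n, ∃ m : ℕ, 1 ≤ m ∧ 0 < (P ^ m) j i)
    (τbar : ℕ) (τ : ℕ → Fin n → Fin n → ℕ)
    (hτle : ∀ k j i, τ k j i ≤ τbar)
    (hτself : ∀ k j, τ k j j = 0)
    (k ℓ : ℕ) (hℓ : τbar + 1 ≤ ℓ) :
    IsSIA (Word n τbar P τ k ℓ) := by
  classical
  haveI : NeZero n := ⟨by omega⟩
  set W := Word n τbar P τ k ℓ with hWdef
  have hWcs : ColStoch W := word_colStoch hP hτle k ℓ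
  choose m hm1 hm2 using hirr
  set M := Finset.univ.sup (fun ji : Fin n × Fin n => m ji.1 ji.2) with hMdef
  have hM : ∀ j i : Fin n, 0 < (W ^ M) ((0 : Fin (τbar+1)), j) ((0 : Fin (τbar+1)), i) := by
    intro j i
    refine pow_pad hP hdiag hτle hτself k ℓ j i (m j i) M ?_
      (pow_block_pos hP hdiag hτle hτself k ℓ hℓ (m j i) j i (hm2 j i))
    exact Finset.le_sup (f := fun ji : Fin n × Fin n => m ji.1 ji.2) (Finset.mem_univ (j, i))
  have key : ∀ p : Fin (τbar+1) × Fin n,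
      0 < (W ^ (M + 1)) ((0 : Fin (τbar+1)), (0 : Fin n)) p := by
    intro p
    rw [pow_succ]
    refine mul_entry_pos (colStoch_pow hWcs M).1 hWcs.1 ((0 : Fin (τbar+1)), p.2)
      (hM 0 p.2) ?_
    have := word_down0 hP hdiag hτle hτself ℓ k p.1 p.2 (by omega)
    rwa [Prod.mk.eta] at this
  refine ⟨hWcs, ?_⟩
  exact exists_sia_limit hWcs (M + 1) (Nat.succ_pos M) ((0 : Fin (τbar+1)), (0 : Fin n)) key
end

section
/- Let n ≥ 2 and let P be an n×n column stochastic matrix with P_{jj} > 0 for all j and such that for every pair (j, i) there exists m ≥ 1 with (P^m)_{ji} > 0. Let y and z both evolve by y[k+1] = P y[k] and z[k+1] = P z[k] with initial conditions y[0] = y₀ ∈ ℝⁿ and z[0] = 𝟙 (the all-ones vector). Then z_j[k] > 0 for all j and k, and for every j, the ratio μ_j[k] = y_j[k] / z_j[k] converges as k → ∞ to (Σ_{l=1}^n y₀(l)) / n. -/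
open Matrix Filter

/-! The quantity `w = y - a • z` with `a = (∑ y₀) / n` has zero sum and evolves
by the same matrix. Positive diagonal plus irreducibility make some power `P ^ M` entrywise
at least `ε > 0`; such a column stochastic matrix contracts the `ℓ¹` norm of zero-sum vectors by
the factor `1 - n ε`, so `w → 0`. The same power keeps `z ≥ n ε`, hence
`y / z - a = w / z → 0`. -/

lemma tendsto_zero_of_antitone_of_le_mul_shift {W : ℕ → ℝ} (h0 : ∀ k, 0 ≤ W k)
    (hW : Antitone W) {θ : ℝ} (hθ : θ < 1) (M : ℕ) (hM : ∀ k, W (k + M) ≤ θ * W k) :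
    Tendsto W atTop (nhds 0) := by
  obtain ⟨L, hL⟩ : ∃ L, Tendsto W atTop (nhds L) :=
    ⟨_, tendsto_atTop_ciInf hW ⟨0, Set.forall_mem_range.2 h0⟩⟩
  have hL0 : 0 ≤ L := ge_of_tendsto' hL h0
  have hLθ : L ≤ θ * L :=
    le_of_tendsto_of_tendsto' ((tendsto_add_atTop_iff_nat M).2 hL) (hL.const_mul θ) hM
  rwa [show L = 0 by nlinarith] at hL

lemma tendsto_div_of_tendsto_sub_mul {α : Type*} {l : Filter α} {u v : α → ℝ} {a c : ℝ}
    (hc : 0 < c) (hv : ∀ x, c ≤ v x) (h : Tendsto (fun x => u x - a * v x) l (nhds 0)) :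
    Tendsto (fun x => u x / v x) l (nhds a) := by
  have hvpos : ∀ x, 0 < v x := fun x => hc.trans_le (hv x)
  have herr : Tendsto (fun x => (u x - a * v x) / v x) l (nhds 0) := by
    refine squeeze_zero_norm (fun x => ?_) (by simpa using h.norm.div_const c)
    rw [norm_div, Real.norm_of_nonneg (hvpos x).le]
    exact div_le_div_of_nonneg_left (norm_nonneg _) hc (hv x)
  convert herr.add_const a using 2 with x
  · field_simp [(hvpos x).ne']
    ring
  · rw [zero_add]

section ColumnStochastic

variable {N : Type*} [Fintype N] {A : Matrix N N ℝ}

lemma diag_mul_le_mulVec (h0 : ∀ j i, 0 ≤ A j i) {x : N → ℝ} (hx : ∀ i, 0 ≤ x i) (j : N) :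
    A j j * x j ≤ (A *ᵥ x) j :=
  Finset.single_le_sum (fun i _ => mul_nonneg (h0 j i) (hx i)) (Finset.mem_univ j)

lemma mul_sum_le_mulVec {ε : ℝ} (hε : ∀ j i, ε ≤ A j i) {x : N → ℝ} (hx : ∀ i, 0 ≤ x i)
    (j : N) : ε * ∑ i, x i ≤ (A *ᵥ x) j := by
  rw [Finset.mul_sum]
  exact Finset.sum_le_sum fun i _ => mul_le_mul_of_nonneg_right (hε j i) (hx i)

lemma iterate_pos_of_diag_pos (h0 : ∀ j i, 0 ≤ A j i) (hdiag : ∀ j, 0 < A j j) {x : ℕ → N → ℝ}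
    (hx : ∀ k, x (k + 1) = A *ᵥ x k) (hx0 : ∀ j, 0 < x 0 j) : ∀ k j, 0 < x k j := by
  intro k
  induction k with
  | zero => exact hx0
  | succ k ih =>
    intro j
    rw [hx]
    exact (mul_pos (hdiag j) (ih j)).trans_le (diag_mul_le_mulVec h0 (fun i => (ih i).le) j)

lemma sum_abs_mulVec_le_mul (h0 : ∀ j i, 0 ≤ A j i) {c : ℝ} (hc : ∀ i, ∑ j, A j i = c)
    (x : N → ℝ) : ∑ j, |(A *ᵥ x) j| ≤ c * ∑ i, |x i| :=
  calc ∑ j, |(A *ᵥ x) j| ≤ ∑ j, ∑ i, A j i * |x i| := by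
        refine Finset.sum_le_sum fun j _ => (Finset.abs_sum_le_sum_abs _ _).trans_eq ?_
        simp_rw [abs_mul, abs_of_nonneg (h0 _ _)]
    _ = c * ∑ i, |x i| := by
        rw [Finset.sum_comm, Finset.mul_sum]
        simp_rw [← Finset.sum_mul, hc]

lemma sum_abs_mulVec_le_of_le_entries (hA : ∀ i, ∑ j, A j i = 1) {ε : ℝ}
    (hε : ∀ j i, ε ≤ A j i) {x : N → ℝ} (hx : ∑ i, x i = 0) :
    ∑ j, |(A *ᵥ x) j| ≤ (1 - Fintype.card N * ε) * ∑ i, |x i| := by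
  -- Subtracting the constant matrix `ε` does not change `A *ᵥ x`, since `x` has zero sum.
  have hAx : A *ᵥ x = (A - of fun _ _ => ε) *ᵥ x := by
    rw [sub_mulVec]
    ext j
    simp only [Pi.sub_apply, mulVec, dotProduct, of_apply, ← Finset.mul_sum, hx, mul_zero,
      sub_zero]
  rw [hAx]
  refine sum_abs_mulVec_le_mul (fun j i => sub_nonneg.2 (hε j i)) (fun i => ?_) x
  simp [Finset.sum_sub_distrib, hA i]

variable [DecidableEq N]

lemma iterate_add_eq_pow_mulVec {x : ℕ → N → ℝ} (hx : ∀ k, x (k + 1) = A *ᵥ x k) (k m : ℕ) :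
    x (k + m) = (A ^ m) *ᵥ x k := by
  induction m with
  | zero => simp
  | succ m ih => rw [← add_assoc, hx, ih, pow_succ', mulVec_mulVec]

lemma colStoch_iff_mem_colStochastic : ColStoch A ↔ A ∈ colStochastic ℝ N :=
  mem_colStochastic_iff_sum.symm

lemma sum_iterate_eq (hA : A ∈ colStochastic ℝ N) {x : ℕ → N → ℝ}
    (hx : ∀ k, x (k + 1) = A *ᵥ x k) (k : ℕ) : ∑ i, x k i = ∑ i, x 0 i := by
  induction k with
  | zero => rfl
  | succ k ih => rw [hx, sum_mulVec_of_mem_colStochastic hA, ih]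

lemma pow_apply_pos_of_le (hA : A ∈ colStochastic ℝ N) (hdiag : ∀ j, 0 < A j j) {j i : N}
    {m m' : ℕ} (hm : 0 < (A ^ m) j i) (hmm' : m ≤ m') : 0 < (A ^ m') j i := by
  induction m', hmm' using Nat.le_induction with
  | base => exact hm
  | succ m' _ ih =>
    rw [pow_succ', mul_apply]
    exact (mul_pos (hdiag j) ih).trans_le
      (diag_mul_le_mulVec hA.1 (fun k => (pow_mem hA m').1 k i) j)

lemma eventually_forall_pow_pos (hA : A ∈ colStochastic ℝ N) (hdiag : ∀ j, 0 < A j j)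
    (hirr : ∀ j i, ∃ m, 0 < (A ^ m) j i) : ∀ᶠ m in atTop, ∀ j i, 0 < (A ^ m) j i := by
  simp only [eventually_all]
  intro j i
  obtain ⟨m, hm⟩ := hirr j i
  exact eventually_atTop.2 ⟨m, fun m' => pow_apply_pos_of_le hA hdiag hm⟩

lemma tendsto_iterate_zero_of_sum_eq_zero [Nonempty N] (hA : A ∈ colStochastic ℝ N) {M : ℕ} {ε : ℝ}
    (hε : 0 < ε) (hεM : ∀ j i, ε ≤ (A ^ M) j i) {w : ℕ → N → ℝ}
    (hw : ∀ k, w (k + 1) = A *ᵥ w k) (hw0 : ∑ i, w 0 i = 0) :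
    Tendsto w atTop (nhds 0) := by
  have hsum : ∀ k, ∑ i, w k i = 0 := fun k => (sum_iterate_eq hA hw k).trans hw0
  have hnorm : Tendsto (fun k => ∑ i, |w k i|) atTop (nhds 0) := by
    refine tendsto_zero_of_antitone_of_le_mul_shift (fun k => by positivity)
      (antitone_nat_of_succ_le fun k => ?_) (θ := 1 - Fintype.card N * ε) ?_ M fun k => ?_
    · rw [hw, ← one_mul (∑ i, |w k i|)]
      exact sum_abs_mulVec_le_mul hA.1 (sum_col_of_mem_colStochastic hA) _
    · exact sub_lt_self 1 (mul_pos (Nat.cast_pos.2 Fintype.card_pos) hε)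
    · rw [iterate_add_eq_pow_mulVec hw]
      exact sum_abs_mulVec_le_of_le_entries (sum_col_of_mem_colStochastic (pow_mem hA M))
        hεM (hsum k)
  refine tendsto_pi_nhds.2 fun j => squeeze_zero_norm (fun k => ?_) hnorm
  exact Finset.single_le_sum (f := fun i => |w k i|) (fun i _ => abs_nonneg _)
    (Finset.mem_univ j)

end ColumnStochastic

theorem statement3_general (n : ℕ)
    (P : Matrix (Fin n) (Fin n) ℝ) (hP : ColStoch P)
    (hdiag : ∀ j, 0 < P j j)
    (hirr : ∀ j i : Fin n, ∃ m : ℕ, 1 ≤ m ∧ 0 < (P ^ m) j i)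
    (y z : ℕ → Fin n → ℝ) (y0 : Fin n → ℝ)
    (hy0 : y 0 = y0) (hz0 : ∀ j, z 0 j = 1)
    (hy : ∀ k, y (k + 1) = P.mulVec (y k))
    (hz : ∀ k, z (k + 1) = P.mulVec (z k)) :
    (∀ k j, 0 < z k j) ∧
      ∀ j, Tendsto (fun k => y k j / z k j) atTop (nhds ((∑ l, y0 l) / (n : ℝ))) := by
  rw [colStoch_iff_mem_colStochastic] at hP
  have hzpos := iterate_pos_of_diag_pos hP.1 hdiag hz (by simp [hz0])
  refine ⟨hzpos, fun j => ?_⟩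
  have : Nonempty (Fin n) := ⟨j⟩
  have hn_pos : (0 : ℝ) < n := Nat.cast_pos.2 j.pos
  obtain ⟨M, hMpos⟩ := (eventually_forall_pow_pos hP hdiag fun j i =>
    (hirr j i).imp fun _ => And.right).exists
  obtain ⟨⟨j₀, i₀⟩, hmin⟩ := Finite.exists_min fun p : Fin n × Fin n => (P ^ M) p.1 p.2
  set a := (∑ l, y0 l) / (n : ℝ)
  have hzsum : ∀ k, ∑ i, z k i = n := fun k => by simp [sum_iterate_eq hP hz k, hz0]
  have hw : Tendsto (fun k => y k - a • z k) atTop (nhds 0) := by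
    refine tendsto_iterate_zero_of_sum_eq_zero hP (hMpos j₀ i₀) (fun j i => hmin (j, i))
      (fun k => ?_) ?_
    · rw [hy, hz, mulVec_sub, mulVec_smul]
    · simp [Finset.sum_sub_distrib, ← Finset.mul_sum, hzsum, hy0, a, hn_pos.ne']
  rw [← tendsto_add_atTop_iff_nat M]
  refine tendsto_div_of_tendsto_sub_mul (mul_pos (hMpos j₀ i₀) hn_pos) (fun k => ?_)
    (tendsto_pi_nhds.1 ((tendsto_add_atTop_iff_nat M).2 hw) j)
  rw [iterate_add_eq_pow_mulVec hz, ← hzsum k]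
  exact mul_sum_le_mulVec (fun j i => hmin (j, i)) (fun i => (hzpos k i).le) j

theorem statement3 (n : ℕ) (hn : 2 ≤ n)
    (P : Matrix (Fin n) (Fin n) ℝ) (hP : ColStoch P)
    (hdiag : ∀ j, 0 < P j j)
    (hirr : ∀ j i : Fin n, ∃ m : ℕ, 1 ≤ m ∧ 0 < (P ^ m) j i)
    (y z : ℕ → Fin n → ℝ) (y0 : Fin n → ℝ)
    (hy0 : y 0 = y0) (hz0 : ∀ j, z 0 j = 1)
    (hy : ∀ k, y (k + 1) = P.mulVec (y k))
    (hz : ∀ k, z (k + 1) = P.mulVec (z k)) :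
    (∀ k j, 0 < z k j) ∧
      ∀ j, Tendsto (fun k => y k j / z k j) atTop (nhds ((∑ l, y0 l) / (n : ℝ))) :=
  statement3_general n P hP hdiag hirr y z y0 hy0 hz0 hy hz
end

section
/- Let n ≥ 2 and let (E[k])_{k≥0} be a sequence of edge sets on vertex set {1, …, n} (directed edges, no self-loops). For each k define the n×n matrix P[k] by P[k]_{lj} = 1/(1 + D_j⁺[k]) if l = j or (l, j) ∈ E[k], and P[k]_{lj} = 0 otherwise, where D_j⁺[k] is the number of out-neighbors of j in E[k]. Suppose there exist an integer ℓ ≥ 1 and a strictly increasing sequence of times t₀ = 0 < t₁ < t₂ < … with t_{m+1} − t_m ≤ ℓ for all m, such that for every m the union digraph with edge set E[t_m] ∪ E[t_m + 1] ∪ … ∪ E[t_{m+1} − 1] is strongly connected. Let y and z evolve by y[k+1] = P[k] y[k] and z[k+1] = P[k] z[k] with y[0] = y₀ ∈ ℝⁿ and z[0] = 𝟙. Then z_j[k] > 0 for all j and k, and for every j, y_j[k] / z_j[k] converges as k → ∞ to (Σ_{l=1}^n y₀(l)) / n. -/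
open Matrix Filter

/-- The out-degree of node `j`: the number of edges `(l, j)` (from `j` to `l`) in `E`. -/
def outDeg {n : ℕ} (E : Finset (Fin n × Fin n)) (j : Fin n) : ℕ :=
  (E.filter fun e => e.2 = j).card

/-- The weight matrix associated with edge set `E`: node `j` puts weight
`1/(1 + D_j⁺)` on its self-link and on each outgoing link `(l, j)`; zero otherwise. -/
noncomputable def degWeights {n : ℕ} (E : Finset (Fin n × Fin n)) : Matrix (Fin n) (Fin n) ℝ :=
  fun l j => if l = j ∨ (l, j) ∈ E then 1 / (1 + (outDeg E j : ℝ)) else 0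

/-- The digraph with edge set `F` (an edge `(l, j)` points from `j` to `l`) is strongly
connected: for every ordered pair of distinct vertices there is a directed path. -/
def StronglyConnected {n : ℕ} (F : Finset (Fin n × Fin n)) : Prop :=
  ∀ i j : Fin n, i ≠ j → Relation.TransGen (fun a b => (b, a) ∈ F) i j

/-!
The matrices `degWeights (E k)` are nonnegative, column stochastic, and at least `δ = 1/n` on the
diagonal and on the edges, so sums are conserved and a bound `m • z ≤ y ≤ M • z` persists in time:
`y - m • z` and `M • z - y` are again nonnegative solutions of the same recursion. During each
strongly connected window a nonnegative solution becomes large on at least one new node, so after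
`n - 1` windows every node holds a fixed fraction `δ ^ (ℓ * (n - 1)) / n` of its total mass.
Applied to whichever of `y - m • z`, `M • z - y` carries half of their joint mass
`(M - m) * ∑ z`, this shrinks the gap `M - m` by the factor `1 - δ ^ (ℓ * (n - 1)) / (2 * n)`.
Both `y / z` and the conserved ratio `∑ y / ∑ z` stay in `[m, M]`, which forces the limit.
-/

open Finset

section degWeights
variable {n : ℕ} {E : Finset (Fin n × Fin n)}

lemma card_filter_eq_or_mem (hE : ∀ e ∈ E, e.1 ≠ e.2) (j : Fin n) :
    #{l | l = j ∨ (l, j) ∈ E} = 1 + outDeg E j := by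
  have hout : #{l | (l, j) ∈ E} = outDeg E j :=
    card_nbij' (fun l => (l, j)) Prod.fst (fun l => by simp) (fun e => by aesop)
      (fun l _ => rfl) (fun e => by aesop)
  have hdisj : Disjoint {j} ({l | (l, j) ∈ E} : Finset (Fin n)) := by
    simpa using fun h => hE (j, j) h rfl
  rw [filter_or, filter_eq' univ j, if_pos (mem_univ j), card_union_of_disjoint hdisj,
    card_singleton, hout]

lemma degWeights_nonneg (E : Finset (Fin n × Fin n)) (l j : Fin n) : 0 ≤ degWeights E l j := by
  unfold degWeights
  split_ifs <;> positivity

lemma inv_le_degWeights (hE : ∀ e ∈ E, e.1 ≠ e.2) {l j : Fin n} (h : l = j ∨ (l, j) ∈ E) :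
    (n : ℝ)⁻¹ ≤ degWeights E l j := by
  have hle : 1 + outDeg E j ≤ n := by
    simpa [card_filter_eq_or_mem hE] using card_filter_le univ (fun l => l = j ∨ (l, j) ∈ E)
  rw [degWeights, if_pos h, one_div]
  exact inv_anti₀ (by positivity) (by exact_mod_cast hle)

lemma sum_degWeights_col (hE : ∀ e ∈ E, e.1 ≠ e.2) (j : Fin n) : ∑ l, degWeights E l j = 1 := by
  simp only [degWeights]
  rw [← sum_filter, sum_const, card_filter_eq_or_mem hE, nsmul_eq_mul]
  push_cast
  field_simp

end degWeights

lemma Relation.TransGen.exists_rel_of_not {α : Type*} {r : α → α → Prop} {p : α → Prop}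
    {x y : α} (h : Relation.TransGen r x y) (hx : p x) (hy : ¬p y) :
    ∃ a b, p a ∧ ¬p b ∧ r a b := by
  induction h with
  | single hr => exact ⟨x, _, hx, hy, hr⟩
  | @tail b c _ hr ih => exact (em (p b)).elim (fun hb => ⟨b, c, hb, hy, hr⟩) ih

section Ratio
variable {ι : Type*} {v w : ι → ℝ} {m M : ℝ}

lemma div_mem_Icc_of_mem_Icc_smul (hw : ∀ i, 0 < w i) (h : v ∈ Set.Icc (m • w) (M • w)) (i : ι) :
    v i / w i ∈ Set.Icc m M :=
  ⟨(le_div_iff₀ (hw i)).2 (h.1 i), (div_le_iff₀ (hw i)).2 (h.2 i)⟩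

lemma sum_div_sum_mem_Icc_of_mem_Icc_smul [Fintype ι] [Nonempty ι] (hw : ∀ i, 0 < w i)
    (h : v ∈ Set.Icc (m • w) (M • w)) : (∑ i, v i) / ∑ i, w i ∈ Set.Icc m M := by
  have hsum : 0 < ∑ i, w i := sum_pos (fun i _ => hw i) univ_nonempty
  refine ⟨(le_div_iff₀ hsum).2 ?_, (div_le_iff₀ hsum).2 ?_⟩
  · rw [mul_sum]; exact sum_le_sum fun i _ => h.1 i
  · rw [mul_sum]; exact sum_le_sum fun i _ => h.2 i

end Ratio

def IsTrajectory {ι : Type*} [Fintype ι] (A : ℕ → Matrix ι ι ℝ) (u : ℕ → ι → ℝ) : Prop :=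
  ∀ k, u (k + 1) = A k *ᵥ u k

namespace IsTrajectory

section General
variable {ι : Type*} [Fintype ι] {A : ℕ → Matrix ι ι ℝ} {δ m M : ℝ} {u v y z : ℕ → ι → ℝ}

lemma sub (hu : IsTrajectory A u) (hv : IsTrajectory A v) : IsTrajectory A (u - v) := fun k => by
  simp only [Pi.sub_apply, hu k, hv k, Matrix.mulVec_sub]

lemma const_smul (hu : IsTrajectory A u) (c : ℝ) : IsTrajectory A (c • u) := fun k => by
  simp only [Pi.smul_apply, hu k, Matrix.mulVec_smul]

lemma sum_eq (hu : IsTrajectory A u) (hcol : ∀ k j, ∑ i, A k i j = 1) (k : ℕ) :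
    ∑ i, u k i = ∑ i, u 0 i := by
  induction k with
  | zero => rfl
  | succ k ih =>
    simp only [hu k, Matrix.mulVec, dotProduct]
    rw [sum_comm, ← ih]
    simp only [← sum_mul, hcol, one_mul]

lemma nonneg (hA : ∀ k i j, 0 ≤ A k i j) (hu : IsTrajectory A u) {a b : ℕ} (hab : a ≤ b)
    (ha : 0 ≤ u a) : 0 ≤ u b := by
  induction b, hab using Nat.le_induction with
  | base => exact ha
  | succ b _ ih => exact hu b ▸ fun i => dotProduct_nonneg_of_nonneg (hA b i) ih

lemma mul_le_succ (hA : ∀ k i j, 0 ≤ A k i j) (hu : IsTrajectory A u) {k : ℕ} (hk : 0 ≤ u k)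
    (i j : ι) : A k i j * u k j ≤ u (k + 1) i := by
  rw [hu k]
  exact single_le_sum (f := fun j => A k i j * u k j)
    (fun j _ => mul_nonneg (hA k i j) (hk j)) (mem_univ j)

lemma mem_Icc_smul (hA : ∀ k i j, 0 ≤ A k i j) (hy : IsTrajectory A y)
    (hz : IsTrajectory A z) {a b : ℕ} (hab : a ≤ b) (h : y a ∈ Set.Icc (m • z a) (M • z a)) :
    y b ∈ Set.Icc (m • z b) (M • z b) :=
  ⟨sub_nonneg.1 ((hy.sub (hz.const_smul m)).nonneg hA hab (sub_nonneg.2 h.1)),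
    sub_nonneg.1 (((hz.const_smul M).sub hy).nonneg hA hab (sub_nonneg.2 h.2))⟩

lemma pow_mul_le (hA : ∀ k i j, 0 ≤ A k i j) (hδ0 : 0 ≤ δ) (hdiag : ∀ k i, δ ≤ A k i i)
    (hu : IsTrajectory A u) {a b : ℕ} (hab : a ≤ b) (ha : 0 ≤ u a) (i : ι) :
    δ ^ (b - a) * u a i ≤ u b i := by
  induction b, hab using Nat.le_induction with
  | base => simp
  | succ b hab ih =>
    calc δ ^ (b + 1 - a) * u a i = δ * (δ ^ (b - a) * u a i) := by
          rw [Nat.sub_add_comm hab, pow_succ']; ring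
      _ ≤ A b i i * u b i :=
          mul_le_mul (hdiag b i) ih (mul_nonneg (pow_nonneg hδ0 _) (ha i)) (hA b i i)
      _ ≤ u (b + 1) i := hu.mul_le_succ hA (hu.nonneg hA hab ha) i i

lemma pos (hA : ∀ k i j, 0 ≤ A k i j) (hδ0 : 0 < δ) (hdiag : ∀ k i, δ ≤ A k i i)
    (hu : IsTrajectory A u) (h0 : ∀ i, 0 < u 0 i) (k : ℕ) (i : ι) : 0 < u k i :=
  (mul_pos (pow_pos hδ0 _) (h0 i)).trans_le
    (hu.pow_mul_le hA hδ0.le hdiag (Nat.zero_le k) (fun i => (h0 i).le) i)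

lemma pow_mul_le_of_mem_biUnion [DecidableEq ι] {E : ℕ → Finset (ι × ι)}
    (hA : ∀ k i j, 0 ≤ A k i j) (hδ0 : 0 ≤ δ) (hδ : ∀ k i j, i = j ∨ (i, j) ∈ E k → δ ≤ A k i j)
    (hu : IsTrajectory A u) {a b : ℕ} (hab : a ≤ b) (ha : 0 ≤ u a) {i j : ι}
    (hij : i = j ∨ (i, j) ∈ (Ico a b).biUnion E) :
    δ ^ (b - a) * u a j ≤ u b i := by
  have hdiag k i : δ ≤ A k i i := hδ k i i (.inl rfl)
  obtain rfl | hij := hij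
  · exact hu.pow_mul_le hA hδ0 hdiag hab ha i
  obtain ⟨s, hs, hE⟩ := mem_biUnion.1 hij
  obtain ⟨has, hsb⟩ := mem_Ico.1 hs
  have hus : 0 ≤ u s := hu.nonneg hA has ha
  calc δ ^ (b - a) * u a j = δ ^ (b - (s + 1)) * (δ * (δ ^ (s - a) * u a j)) := by
        rw [← mul_assoc, ← mul_assoc, ← pow_succ, ← pow_add]; congr 2; omega
    _ ≤ δ ^ (b - (s + 1)) * (A s i j * u s j) := by
        refine mul_le_mul_of_nonneg_left ?_ (pow_nonneg hδ0 _)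
        exact mul_le_mul (hδ s i j (.inr hE)) (hu.pow_mul_le hA hδ0 hdiag has ha j)
          (mul_nonneg (pow_nonneg hδ0 _) (ha j)) (hA s i j)
    _ ≤ δ ^ (b - (s + 1)) * u (s + 1) i := by gcongr; exact hu.mul_le_succ hA hus i j
    _ ≤ u b i := hu.pow_mul_le hA hδ0 hdiag hsb (hu.nonneg hA (by omega) ha) i

end General

variable {n : ℕ} {A : ℕ → Matrix (Fin n) (Fin n) ℝ} {E : ℕ → Finset (Fin n × Fin n)} {δ : ℝ}
  {ℓ : ℕ} {t : ℕ → ℕ} {u y z : ℕ → Fin n → ℝ} {m M : ℝ}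

lemma min_card_succ_le_card_of_stronglyConnected (hA : ∀ k i j, 0 ≤ A k i j) (hδ0 : 0 ≤ δ)
    (hδ1 : δ ≤ 1) (hδ : ∀ k i j, i = j ∨ (i, j) ∈ E k → δ ≤ A k i j) (hu : IsTrajectory A u)
    {a b : ℕ} (hab : a < b) (hbℓ : b - a ≤ ℓ) (hsc : StronglyConnected ((Ico a b).biUnion E))
    (ha : 0 ≤ u a) {c : ℝ} (hc : 0 ≤ c) (hne : ∃ i, c ≤ u a i) :
    min (#{i | c ≤ u a i} + 1) n ≤ #{i | δ ^ ℓ * c ≤ u b i} := by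
  have hreach {i j : Fin n} (hij : i = j ∨ (i, j) ∈ (Ico a b).biUnion E) (hj : c ≤ u a j) :
      δ ^ ℓ * c ≤ u b i :=
    calc δ ^ ℓ * c ≤ δ ^ (b - a) * u a j :=
          mul_le_mul (pow_le_pow_of_le_one hδ0 hδ1 hbℓ) hj hc (pow_nonneg hδ0 _)
      _ ≤ u b i := hu.pow_mul_le_of_mem_biUnion hA hδ0 hδ hab.le ha hij
  have hsub : ({i | c ≤ u a i} : Finset (Fin n)) ⊆ ({i | δ ^ ℓ * c ≤ u b i} : Finset _) :=
    fun i hi => mem_filter.2 ⟨mem_univ i, hreach (.inl rfl) (mem_filter.1 hi).2⟩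
  by_cases hall : ∀ j, c ≤ u a j
  · calc min (#{i | c ≤ u a i} + 1) n ≤ n := min_le_right _ _
      _ = #{i | c ≤ u a i} := by simp [hall]
      _ ≤ _ := card_le_card hsub
  obtain ⟨i, hi⟩ := hne
  obtain ⟨j, hj⟩ := not_forall.1 hall
  obtain ⟨a', b', ha', hb', hedge⟩ :=
    (hsc i j (by rintro rfl; exact hj hi)).exists_rel_of_not (p := fun i => c ≤ u a i) hi hj
  have hlt := card_lt_card <| (ssubset_iff_of_subset hsub).2
    ⟨b', mem_filter.2 ⟨mem_univ _, hreach (.inr hedge) ha'⟩, by simpa using hb'⟩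
  omega

lemma pow_mul_le_of_stronglyConnected (hA : ∀ k i j, 0 ≤ A k i j) (hδ0 : 0 ≤ δ) (hδ1 : δ ≤ 1)
    (hδ : ∀ k i j, i = j ∨ (i, j) ∈ E k → δ ≤ A k i j) (ht : StrictMono t)
    (htℓ : ∀ m, t (m + 1) - t m ≤ ℓ)
    (hsc : ∀ m, StronglyConnected ((Ico (t m) (t (m + 1))).biUnion E))
    (hu : IsTrajectory A u) {p : ℕ} (hp : 0 ≤ u (t p)) {c : ℝ} (hc : 0 ≤ c) {i : Fin n}
    (hi : c ≤ u (t p) i) (j : Fin n) :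
    δ ^ (ℓ * (n - 1)) * c ≤ u (t (p + (n - 1))) j := by
  have hn : 0 < n := i.pos
  have hcard (r : ℕ) : min (r + 1) n ≤ #{j | (δ ^ ℓ) ^ r * c ≤ u (t (p + r)) j} := by
    induction r with
    | zero => exact (min_le_left _ _).trans (card_pos.2 ⟨i, by simpa using hi⟩)
    | succ r ih =>
      have hpos : 0 < #({j | (δ ^ ℓ) ^ r * c ≤ u (t (p + r)) j} : Finset (Fin n)) := by omega
      obtain ⟨k, hk⟩ := card_pos.1 hpos
      have := hu.min_card_succ_le_card_of_stronglyConnected hA hδ0 hδ1 hδ (ht (lt_add_one _))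
        (htℓ _) (hsc _)
        (hu.nonneg hA (ht.monotone (Nat.le_add_right p r)) hp) (by positivity)
        ⟨k, (mem_filter.1 hk).2⟩
      rw [pow_succ', mul_assoc, ← add_assoc]
      omega
  have hfull := hcard (n - 1)
  rw [Nat.sub_add_cancel hn, min_self] at hfull
  have hall : ({j | (δ ^ ℓ) ^ (n - 1) * c ≤ u (t (p + (n - 1))) j} : Finset (Fin n)) = univ :=
    eq_univ_of_card _ ((card_le_univ _).antisymm (by simpa using hfull))
  have hj : j ∈ ({j | (δ ^ ℓ) ^ (n - 1) * c ≤ u (t (p + (n - 1))) j} : Finset (Fin n)) :=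
    by rw [hall]; exact mem_univ j
  simpa [pow_mul] using (mem_filter.1 hj).2

lemma pow_mul_sum_div_le (hA : ∀ k i j, 0 ≤ A k i j) (hδ0 : 0 ≤ δ) (hδ1 : δ ≤ 1)
    (hδ : ∀ k i j, i = j ∨ (i, j) ∈ E k → δ ≤ A k i j) (ht : StrictMono t)
    (htℓ : ∀ m, t (m + 1) - t m ≤ ℓ)
    (hsc : ∀ m, StronglyConnected ((Ico (t m) (t (m + 1))).biUnion E))
    (hu : IsTrajectory A u) {p : ℕ} (hp : 0 ≤ u (t p)) (j : Fin n) :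
    δ ^ (ℓ * (n - 1)) * ((∑ i, u (t p) i) / n) ≤ u (t (p + (n - 1))) j := by
  have hn : (0 : ℝ) < n := by exact_mod_cast j.pos
  obtain ⟨i, -, hi⟩ := exists_le_of_sum_le (univ_nonempty_iff.2 ⟨j⟩)
    (f := fun _ => (∑ i, u (t p) i) / n) (g := u (t p))
    (by rw [sum_const, card_univ, Fintype.card_fin, nsmul_eq_mul, mul_div_cancel₀ _ hn.ne'])
  exact hu.pow_mul_le_of_stronglyConnected hA hδ0 hδ1 hδ ht htℓ hsc hp
    (div_nonneg (sum_nonneg fun i _ => hp i) hn.le) hi j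

lemma exists_mem_Icc_smul_contract (hA : ∀ k i j, 0 ≤ A k i j) (hcol : ∀ k j, ∑ i, A k i j = 1)
    (hδ0 : 0 ≤ δ) (hδ1 : δ ≤ 1) (hδ : ∀ k i j, i = j ∨ (i, j) ∈ E k → δ ≤ A k i j)
    (ht : StrictMono t) (htℓ : ∀ m, t (m + 1) - t m ≤ ℓ)
    (hsc : ∀ m, StronglyConnected ((Ico (t m) (t (m + 1))).biUnion E))
    (hy : IsTrajectory A y) (hz : IsTrajectory A z) (hzpos : ∀ k i, 0 < z k i) {p : ℕ}
    (h : y (t p) ∈ Set.Icc (m • z (t p)) (M • z (t p))) :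
    ∃ m' M', y (t (p + (n - 1))) ∈ Set.Icc (m' • z (t (p + (n - 1)))) (M' • z (t (p + (n - 1)))) ∧
      M' - m' ≤ (1 - δ ^ (ℓ * (n - 1)) / (2 * n)) * (M - m) := by
  set q := p + (n - 1)
  set η := δ ^ (ℓ * (n - 1)) / (2 * n) with hη
  have h' : y (t q) ∈ Set.Icc (m • z (t q)) (M • z (t q)) :=
    hy.mem_Icc_smul hA hz (ht.monotone (Nat.le_add_right p _)) h
  have hZ : ∑ i, z (t q) i = ∑ i, z (t p) i := (hz.sum_eq hcol _).trans (hz.sum_eq hcol _).symm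
  have hsum : ∑ i, (y - m • z) (t p) i + ∑ i, (M • z - y) (t p) i = (M - m) * ∑ i, z (t p) i := by
    rw [← sum_add_distrib, mul_sum]
    exact sum_congr rfl fun i _ => by simp only [Pi.sub_apply, Pi.smul_apply, smul_eq_mul]; ring
  have hgain {w : ℕ → Fin n → ℝ} (hw : IsTrajectory A w) (hw0 : 0 ≤ w (t p))
      (hwsum : (M - m) * (∑ i, z (t p) i) / 2 ≤ ∑ i, w (t p) i) (j : Fin n) :
      η * (M - m) * z (t q) j ≤ w (t q) j := by
    have hn : (0 : ℝ) < n := by exact_mod_cast j.pos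
    have hMm : 0 ≤ M - m := by
      have := (h'.1 j).trans (h'.2 j)
      simp only [Pi.smul_apply, smul_eq_mul] at this
      nlinarith [hzpos (t q) j]
    calc η * (M - m) * z (t q) j ≤ η * (M - m) * ∑ i, z (t q) i := by
          gcongr
          exact single_le_sum (fun i _ => (hzpos _ i).le) (mem_univ j)
      _ = δ ^ (ℓ * (n - 1)) * ((M - m) * (∑ i, z (t p) i) / 2 / n) := by
          rw [hZ, hη]; field_simp
      _ ≤ δ ^ (ℓ * (n - 1)) * ((∑ i, w (t p) i) / n) := by gcongr
      _ ≤ w (t q) j := hw.pow_mul_sum_div_le hA hδ0 hδ1 hδ ht htℓ hsc hw0 j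
  rcases le_total (∑ i, (M • z - y) (t p) i) (∑ i, (y - m • z) (t p) i) with hle | hle
  · refine ⟨m + η * (M - m), M, ⟨fun j => ?_, h'.2⟩, by linarith⟩
    have := hgain (hy.sub (hz.const_smul m)) (sub_nonneg.2 h.1) (by linarith) j
    simp only [Pi.sub_apply, Pi.smul_apply, smul_eq_mul] at this ⊢
    linarith
  · refine ⟨m, M - η * (M - m), ⟨h'.1, fun j => ?_⟩, by linarith⟩
    have := hgain ((hz.const_smul M).sub hy) (sub_nonneg.2 h.2) (by linarith) j
    simp only [Pi.sub_apply, Pi.smul_apply, smul_eq_mul] at this ⊢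
    linarith

theorem tendsto_div_of_stronglyConnected (hA : ∀ k i j, 0 ≤ A k i j)
    (hcol : ∀ k j, ∑ i, A k i j = 1) (hδ0 : 0 < δ) (hδ1 : δ ≤ 1)
    (hδ : ∀ k i j, i = j ∨ (i, j) ∈ E k → δ ≤ A k i j) (ht : StrictMono t)
    (htℓ : ∀ m, t (m + 1) - t m ≤ ℓ)
    (hsc : ∀ m, StronglyConnected ((Ico (t m) (t (m + 1))).biUnion E))
    (hy : IsTrajectory A y) (hz : IsTrajectory A z) (hz0 : ∀ i, 0 < z 0 i) (j : Fin n) :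
    Tendsto (fun k => y k j / z k j) atTop (nhds ((∑ i, y 0 i) / ∑ i, z 0 i)) := by
  have hn : (1 : ℝ) ≤ n := by exact_mod_cast j.pos
  have hzpos := hz.pos hA hδ0 (fun k i => hδ k i i (.inl rfl)) hz0
  set ρ := 1 - δ ^ (ℓ * (n - 1)) / (2 * n)
  have hρ0 : 0 ≤ ρ := by
    have : δ ^ (ℓ * (n - 1)) / (2 * n) ≤ 1 :=
      (div_le_one (by positivity)).2 ((pow_le_one₀ hδ0.le hδ1).trans (by linarith))
    linarith
  have hρ1 : ρ < 1 := sub_lt_self 1 (by positivity)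
  obtain ⟨M₀, hM₀⟩ := Finite.bddAbove_range fun i => y 0 i / z 0 i
  obtain ⟨m₀, hm₀⟩ := Finite.bddBelow_range fun i => y 0 i / z 0 i
  have h₀ : y 0 ∈ Set.Icc (m₀ • z 0) (M₀ • z 0) :=
    ⟨fun i => (le_div_iff₀ (hz0 i)).1 (hm₀ (Set.mem_range_self i)),
      fun i => (div_le_iff₀ (hz0 i)).1 (hM₀ (Set.mem_range_self i))⟩
  have hiter (s : ℕ) : ∃ m M, y (t ((n - 1) * s)) ∈ Set.Icc (m • z (t ((n - 1) * s)))
      (M • z (t ((n - 1) * s))) ∧ M - m ≤ ρ ^ s * (M₀ - m₀) := by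
    induction s with
    | zero => exact ⟨m₀, M₀, hy.mem_Icc_smul hA hz (Nat.zero_le _) h₀, by simp⟩
    | succ s ih =>
      obtain ⟨m, M, hmM, hgap⟩ := ih
      obtain ⟨m', M', hmM', hgap'⟩ :=
        hy.exists_mem_Icc_smul_contract hA hcol hδ0.le hδ1 hδ ht htℓ hsc hz hzpos hmM
      refine ⟨m', M', by rwa [mul_add_one], hgap'.trans ?_⟩
      rw [pow_succ', mul_assoc]
      exact mul_le_mul_of_nonneg_left hgap hρ0
  rw [Metric.tendsto_atTop]
  intro ε hε
  have hdecay := (tendsto_pow_atTop_nhds_zero_of_lt_one hρ0 hρ1).mul_const (M₀ - m₀)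
  obtain ⟨s, hs⟩ := (hdecay.eventually (gt_mem_nhds (by simpa using hε))).exists
  obtain ⟨m, M, hmM, hgap⟩ := hiter s
  refine ⟨t ((n - 1) * s), fun k hk => ?_⟩
  have hk := hy.mem_Icc_smul hA hz hk hmM
  have hne : Nonempty (Fin n) := ⟨j⟩
  calc dist (y k j / z k j) ((∑ i, y 0 i) / ∑ i, z 0 i) ≤ M - m := by
        refine Real.dist_le_of_mem_Icc (div_mem_Icc_of_mem_Icc_smul (hzpos k) hk j) ?_
        rw [← hy.sum_eq hcol k, ← hz.sum_eq hcol k]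
        exact sum_div_sum_mem_Icc_of_mem_Icc_smul (hzpos k) hk
    _ < ε := hgap.trans_lt hs

end IsTrajectory

theorem statement5_general (n : ℕ) (hn : 2 ≤ n)
    (E : ℕ → Finset (Fin n × Fin n))
    (hnoself : ∀ k, ∀ e ∈ E k, e.1 ≠ e.2)
    (ℓ : ℕ)
    (t : ℕ → ℕ) (htmono : StrictMono t)
    (htℓ : ∀ m, t (m + 1) - t m ≤ ℓ)
    (hsc : ∀ m, StronglyConnected ((Finset.Ico (t m) (t (m + 1))).biUnion E))
    (y z : ℕ → Fin n → ℝ) (y0 : Fin n → ℝ)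
    (hy0 : y 0 = y0) (hz0 : ∀ j, z 0 j = 1)
    (hy : ∀ k, y (k + 1) = (degWeights (E k)).mulVec (y k))
    (hz : ∀ k, z (k + 1) = (degWeights (E k)).mulVec (z k)) :
    (∀ k j, 0 < z k j) ∧
      ∀ j, Tendsto (fun k => y k j / z k j) atTop (nhds ((∑ l, y0 l) / (n : ℝ))) := by
  have hA k : ∀ i j, 0 ≤ degWeights (E k) i j := degWeights_nonneg (E k)
  have hcol k : ∀ j, ∑ i, degWeights (E k) i j = 1 := sum_degWeights_col (hnoself k)
  have hδ k i j : i = j ∨ (i, j) ∈ E k → (n : ℝ)⁻¹ ≤ degWeights (E k) i j :=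
    inv_le_degWeights (hnoself k)
  have hδ0 : (0 : ℝ) < (n : ℝ)⁻¹ := inv_pos.2 (Nat.cast_pos.2 (by omega))
  have hz1 : ∀ i, 0 < z 0 i := fun i => hz0 i ▸ one_pos
  refine ⟨IsTrajectory.pos hA hδ0 (fun k i => hδ k i i (.inl rfl)) hz hz1, fun j => ?_⟩
  simpa [hy0, hz0] using IsTrajectory.tendsto_div_of_stronglyConnected hA hcol hδ0
    (Nat.cast_inv_le_one n) hδ htmono htℓ hsc hy hz hz1 j

theorem statement5 (n : ℕ) (hn : 2 ≤ n)
    (E : ℕ → Finset (Fin n × Fin n))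
    (hnoself : ∀ k, ∀ e ∈ E k, e.1 ≠ e.2)
    (ℓ : ℕ) (hℓ : 1 ≤ ℓ)
    (t : ℕ → ℕ) (ht0 : t 0 = 0) (htmono : StrictMono t)
    (htℓ : ∀ m, t (m + 1) - t m ≤ ℓ)
    (hsc : ∀ m, StronglyConnected ((Finset.Ico (t m) (t (m + 1))).biUnion E))
    (y z : ℕ → Fin n → ℝ) (y0 : Fin n → ℝ)
    (hy0 : y 0 = y0) (hz0 : ∀ j, z 0 j = 1)
    (hy : ∀ k, y (k + 1) = (degWeights (E k)).mulVec (y k))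
    (hz : ∀ k, z (k + 1) = (degWeights (E k)).mulVec (z k)) :
    (∀ k j, 0 < z k j) ∧
      ∀ j, Tendsto (fun k => y k j / z k j) atTop (nhds ((∑ l, y0 l) / (n : ℝ))) :=
  statement5_general n hn E hnoself ℓ t htmono htℓ hsc y z y0 hy0 hz0 hy hz
end

section
/- Let P be an n×n column stochastic matrix with P_{jj} > 0 for all j, let τ̄ ∈ ℕ, and let τ(k, j, i) ∈ {0, …, τ̄} be delay functions with τ(k, j, j) = 0. Let x̄ : ℕ → ℝ^{(τ̄+1)n} evolve by x̄[k+1] = P̄[k] x̄[k] with x̄[0] = (x₀; 0; …; 0) for some x₀ ∈ ℝⁿ (all virtual coordinates initialized to zero). Then the first n coordinates of x̄ satisfy the delayed iteration driven by P and τ: for all k ≥ 0 and all j ∈ {1, …, n}, x̄_j[k+1] = Σ_{i=1}^n Σ_{s=0}^{k} [s + τ(s, j, i) = k] · P_{ji} · x̄_i[s], with x̄_j[0] = x₀(j). -/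
/-!
Block `r` of the augmented state is a delay line: at each step it receives the messages whose
remaining delay is `r` and hands its content on to block `r - 1`. Hence, by induction on `k`,
node `(r, j)` holds at time `k + 1` exactly the messages sent to `j` at times `s ≤ k` with
`s + τ(s, j, i) = k + r`, and `r = 0` is the claim.
-/

open Matrix Filter

section
variable {n τbar : ℕ} (P : Matrix (Fin n) (Fin n) ℝ) (τ : ℕ → Fin n → Fin n → ℕ)

theorem augMat_mulVec_apply (k : ℕ) (v : Fin (τbar + 1) × Fin n → ℝ) (r : Fin (τbar + 1))
    (j : Fin n) :
    (AugMat n τbar P τ k *ᵥ v) (r, j) =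
      (∑ i, if τ k j i = r.val then P j i * v (0, i) else 0) +
        if h : r.val + 1 < τbar + 1 then v (⟨r.val + 1, h⟩, j) else 0 := by
  rw [mulVec, dotProduct, Fintype.sum_prod_type, Fin.sum_univ_succ]
  congr 1
  · simp [AugMat, ite_mul]
  · simp [AugMat, ite_and]
    split_ifs with h
    · rw [Finset.sum_eq_single ⟨r.val, h⟩] <;> simp +contextual [Fin.ext_iff, eq_comm]
    · exact Finset.sum_eq_zero fun r' _ => if_neg (by omega)

def delayedInflow (x : ℕ → Fin n → ℝ) (k r : ℕ) (j : Fin n) : ℝ :=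
  ∑ i, ∑ s ∈ Finset.range (k + 1), if s + τ s j i = k + r then P j i * x s i else 0

theorem delayedInflow_zero (x : ℕ → Fin n → ℝ) (r : ℕ) (j : Fin n) :
    delayedInflow P τ x 0 r j = ∑ i, if τ 0 j i = r then P j i * x 0 i else 0 := by
  simp [delayedInflow]

theorem delayedInflow_succ (x : ℕ → Fin n → ℝ) (k r : ℕ) (j : Fin n) :
    delayedInflow P τ x (k + 1) r j =
      delayedInflow P τ x k (r + 1) j +
        ∑ i, if τ (k + 1) j i = r then P j i * x (k + 1) i else 0 := by
  rw [delayedInflow, delayedInflow, ← Finset.sum_add_distrib]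
  refine Finset.sum_congr rfl fun i _ => ?_
  rw [Finset.sum_range_succ]
  congr 1
  · exact Finset.sum_congr rfl fun s _ => by rw [add_right_comm, add_assoc]
  · exact if_congr (by omega) rfl rfl

theorem delayedInflow_eq_zero_of_lt (hτle : ∀ k j i, τ k j i ≤ τbar) (x : ℕ → Fin n → ℝ)
    {k r : ℕ} (hr : τbar < r) (j : Fin n) : delayedInflow P τ x k r j = 0 := by
  refine Finset.sum_eq_zero fun i _ => Finset.sum_eq_zero fun s hs => if_neg ?_
  have := hτle s j i
  have := Finset.mem_range.mp hs
  omega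

theorem augState_succ_eq_delayedInflow (hτle : ∀ k j i, τ k j i ≤ τbar)
    (xbar : ℕ → Fin (τbar + 1) × Fin n → ℝ)
    (hx0 : ∀ p : Fin (τbar + 1) × Fin n, p.1 ≠ 0 → xbar 0 p = 0)
    (hx : ∀ k, xbar (k + 1) = AugMat n τbar P τ k *ᵥ xbar k) (k : ℕ) (r : Fin (τbar + 1))
    (j : Fin n) :
    xbar (k + 1) (r, j) = delayedInflow P τ (fun s i => xbar s (0, i)) k r j := by
  induction k generalizing r with
  | zero =>
    rw [hx, augMat_mulVec_apply, delayedInflow_zero, dite_eq_right_iff.mpr, add_zero]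
    exact fun _ => hx0 _ fun h => Nat.succ_ne_zero _ (Fin.val_eq_of_eq h)
  | succ k ih =>
    rw [hx, augMat_mulVec_apply, delayedInflow_succ, add_comm]
    congr 1
    split_ifs with h
    · exact ih _
    · exact (delayedInflow_eq_zero_of_lt P τ hτle _ (by omega) j).symm

end

theorem statement7_general (n : ℕ)
    (P : Matrix (Fin n) (Fin n) ℝ)
    (τbar : ℕ) (τ : ℕ → Fin n → Fin n → ℕ)
    (hτle : ∀ k j i, τ k j i ≤ τbar)
    (x0 : Fin n → ℝ) (xbar : ℕ → Fin (τbar + 1) × Fin n → ℝ)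
    (hx0 : xbar 0 = fun p => if p.1.val = 0 then x0 p.2 else 0)
    (hx : ∀ k, xbar (k + 1) = (AugMat n τbar P τ k).mulVec (xbar k)) :
    (∀ j : Fin n, xbar 0 (0, j) = x0 j) ∧
      ∀ (k : ℕ) (j : Fin n), xbar (k + 1) (0, j) =
        ∑ i, ∑ s ∈ Finset.range (k + 1),
          if s + τ s j i = k then P j i * xbar s (0, i) else 0 := by
  have hvirtual : ∀ p : Fin (τbar + 1) × Fin n, p.1 ≠ 0 → xbar 0 p = 0 := fun p hp => by
    rw [hx0]
    exact if_neg fun h => hp (Fin.ext h)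
  refine ⟨fun j => by simp [hx0], fun k j => ?_⟩
  simpa [delayedInflow] using augState_succ_eq_delayedInflow P τ hτle xbar hvirtual hx k 0 j

theorem statement7 (n : ℕ)
    (P : Matrix (Fin n) (Fin n) ℝ) (hP : ColStoch P)
    (hdiag : ∀ j, 0 < P j j)
    (τbar : ℕ) (τ : ℕ → Fin n → Fin n → ℕ)
    (hτle : ∀ k j i, τ k j i ≤ τbar)
    (hτself : ∀ k j, τ k j j = 0)
    (x0 : Fin n → ℝ) (xbar : ℕ → Fin (τbar + 1) × Fin n → ℝ)
    (hx0 : xbar 0 = fun p => if p.1.val = 0 then x0 p.2 else 0)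
    (hx : ∀ k, xbar (k + 1) = (AugMat n τbar P τ k).mulVec (xbar k)) :
    (∀ j : Fin n, xbar 0 (0, j) = x0 j) ∧
      ∀ (k : ℕ) (j : Fin n), xbar (k + 1) (0, j) =
        ∑ i, ∑ s ∈ Finset.range (k + 1),
          if s + τ s j i = k then P j i * xbar s (0, i) else 0 :=
  statement7_general n P τbar τ hτle x0 xbar hx0 hx
end
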